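/- arXiv:math/0202252 — 4 statements merged into one kernel-verified Lean document; each statement's English description precedes it below -/
import Mathlib

section
/- Let (W,S) be a finite Coxeter system and W' = W_I a standard parabolic subgroup for I ⊆ S. Then the length function of (W_I, I) is the restriction to W_I of the length function of W, the Bruhat–Chevalley order of (W_I, I) is the restriction to W_I of the Bruhat–Chevalley order of W, and the pattern map φ: W → W_I satisfies the stronger property: for all x ∈ W and w ∈ W_I, φ(x) ≤' φ(wx) if and only if x ≤ wx. -/
/-!
The strong exchange condition comes from the sign cocycle of Björner and Brenti: `s i` acts on
`W × ℤˣ` by `(t, ε) ↦ (s i * t * s i, ±ε)`, flipping the sign exactly when `t = s i`. These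
involutions satisfy the braid relations, so they define an action of `W`, and reading off the
sign shows that the parity of the number of occurrences of a reflection `t` in the right
inversion sequence of a word depends only on the product `w` of the word; it is odd exactly
when `ℓ (w * t) < ℓ w`.

By exchange, every word contains a reduced subword with the same product, so elements of `W_I`
have reduced words in the letters of `I` and the two length functions agree on `W_I`. Exchange
also shows that the Bruhat-smaller elements are products of subwords of any word, while
Deodhar's property Z shows that subwords of a reduced `I`-word lie below it in the order of
`W_I`; hence the two orders agree on `W_I`.

For the pattern map, write `x = a⁻¹ * x₀` with `a ∈ W_I` and `x₀` of minimal length in its coset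
`W_I * x₀`. Then `a * x₀ ≤ b * x₀` forces `a` to be the product of a subword of a reduced word
of `b`, so `a ≤' b`. Since `1 ≤' φ x₀`, equivariance and the axiom on `φ` give
`(φ x₀)⁻¹ * x₀ ≤ x₀`, hence `(φ x₀)⁻¹ ≤' 1` and `φ x₀ = 1`. So `φ x = a⁻¹` and
`φ (w * x) = w * a⁻¹`, and `x ≤ w * x` gives `a⁻¹ ≤' w * a⁻¹`.
-/

open Polynomial

variable {W : Type*} [Group W]

noncomputable def genLength (T : Set W) (w : W) : ℕ :=
  sInf {n | ∃ l : List W, (∀ g ∈ l, g ∈ T) ∧ l.length = n ∧ l.prod = w}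

def genReflections (T : Set W) : Set W :=
  {r | ∃ u ∈ Subgroup.closure T, ∃ t ∈ T, r = u * t * u⁻¹}

def genBruhatLE (T : Set W) : W → W → Prop :=
  Relation.ReflTransGen (fun x y => genLength T x < genLength T y ∧ x * y⁻¹ ∈ genReflections T)

def IsKLFamily (T : Set W) (P : W → W → Polynomial ℤ) : Prop :=
  ∃ R : W → W → Polynomial ℤ,
    (∀ x w, ¬ genBruhatLE T x w → R x w = 0) ∧
    (∀ w, R w w = 1) ∧
    (∀ s ∈ T, ∀ x w : W, genLength T (s * w) < genLength T w →
      (genLength T (s * x) < genLength T x → R x w = R (s * x) (s * w)) ∧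
      (genLength T x < genLength T (s * x) →
        R x w = (Polynomial.X - 1) * R x (s * w) + Polynomial.X * R (s * x) (s * w))) ∧
    (∀ x w, ¬ genBruhatLE T x w → P x w = 0) ∧
    (∀ w, P w w = 1) ∧
    (∀ x w, genBruhatLE T x w → x ≠ w →
      2 * (P x w).natDegree < genLength T w - genLength T x) ∧
    (∀ x w, genBruhatLE T x w →
      Polynomial.reflect (genLength T w - genLength T x) (P x w) =
        ∑ᶠ y ∈ {y | genBruhatLE T x y ∧ genBruhatLE T y w}, R x y * P y w)

def IsPatternMap (S : Set W) (W' : Subgroup W) (S' : Set W) (φ : W → W) : Prop :=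
  (∀ x, φ x ∈ W') ∧
  (∀ w ∈ W', ∀ x, φ (w * x) = w * φ x) ∧
  (∀ x : W, ∀ w ∈ W', genBruhatLE S' (φ x) (φ (w * x)) → genBruhatLE S x (w * x))

def CoxeterMatrix.IsCrystallographic {B : Type*} (M : CoxeterMatrix B) : Prop :=
  ∀ i j, i ≠ j → M i j ∈ ({2, 3, 4, 6} : Set ℕ)

/-- `genBruhatLE T` is, by definition, the reflexive-transitive closure of this relation. -/
def genBruhatStep (T : Set W) (x y : W) : Prop :=
  genLength T x < genLength T y ∧ x * y⁻¹ ∈ genReflections T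

theorem mem_closure_of_genLength_pos {T : Set W} {w : W} (h : 0 < genLength T w) :
    w ∈ Subgroup.closure T := by
  obtain ⟨n, l, hl, -, rfl⟩ := Nat.nonempty_of_pos_sInf h
  exact Subgroup.list_prod_mem _ fun g hg => Subgroup.subset_closure (hl g hg)

theorem genReflections_subset_closure (T : Set W) : genReflections T ⊆ Subgroup.closure T := by
  rintro _ ⟨u, hu, t, ht, rfl⟩
  exact mul_mem (mul_mem hu (Subgroup.subset_closure ht)) (inv_mem hu)

theorem genReflections_mono {T T' : Set W} (h : T ⊆ T') : genReflections T ⊆ genReflections T' := by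
  rintro _ ⟨u, hu, t, ht, rfl⟩
  exact ⟨u, Subgroup.closure_mono h hu, t, h ht, rfl⟩

/-- Outside `Subgroup.closure T` the length `genLength T` is `sInf ∅ = 0`, so a Bruhat step
never leaves the subgroup generated by `T`. -/
theorem genBruhatStep.mem_closure {T : Set W} {x y : W} (h : genBruhatStep T x y) :
    x ∈ Subgroup.closure T ∧ y ∈ Subgroup.closure T := by
  have hy := mem_closure_of_genLength_pos (Nat.zero_lt_of_lt h.1)
  refine ⟨?_, hy⟩
  simpa using mul_mem (genReflections_subset_closure T h.2) hy

namespace CoxeterSystem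

open List

variable {B : Type*} {M : CoxeterMatrix B} (cs : CoxeterSystem M W)

local prefix:100 "s" => cs.simple
local prefix:100 "π" => cs.wordProd
local prefix:100 "ℓ" => cs.length
local prefix:100 "ris" => cs.rightInvSeq
local prefix:100 "lis" => cs.leftInvSeq

open scoped Classical in
noncomputable def signPerm (i : B) : Equiv.Perm (W × ℤˣ) :=
  Function.Involutive.toPerm (fun p => (s i * p.1 * s i, if p.1 = s i then -p.2 else p.2)) <| by
    rintro ⟨t, ε⟩
    have hconj : s i * (s i * t * s i) * s i = t := by
      simp only [mul_assoc, simple_mul_simple_self, mul_one, simple_mul_simple_cancel_left]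
    have hfix : s i * t * s i = s i ↔ t = s i := by
      rw [mul_assoc, mul_eq_left, mul_eq_one_iff_eq_inv, inv_simple]
    by_cases ht : t = s i <;> simp [hconj, hfix, ht]

open scoped Classical in
theorem signPerm_apply (i : B) (t : W) (ε : ℤˣ) :
    cs.signPerm i (t, ε) = (s i * t * s i, if t = s i then -ε else ε) :=
  rfl

theorem rightInvSeq_alternatingWord_perm (i i' : B) (n : ℕ) :
    (ris (alternatingWord i i' n)).Perm ((range n).map fun k => s i' * (s i * s i') ^ k) := by
  induction n generalizing i i' with
  | zero => simp [alternatingWord]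
  | succ n ih =>
    rw [alternatingWord_succ, rightInvSeq_concat, concat_eq_append, range_succ_eq_map,
      map_cons, map_map, pow_zero, mul_one]
    refine (((ih i' i).map _).append_right _).trans (perm_append_singleton _ _) |>.trans ?_
    rw [map_map]
    refine .cons _ (.of_eq (map_congr_left fun k _ => ?_))
    simp only [Function.comp_apply, MulAut.conj_apply, inv_simple, pow_succ']
    rw [mul_assoc, mul_assoc, mul_pow_mul]
    simp only [mul_assoc]

section DecidableEq

variable [DecidableEq W]

theorem prod_map_signPerm_apply (ω : List B) (t : W) (ε : ℤˣ) :
    (ω.map cs.signPerm).prod (t, ε) =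
      (π ω * t * (π ω)⁻¹, (-1) ^ (ris ω).count t * ε) := by
  induction ω generalizing ε with
  | nil => simp
  | cons i ω ih =>
    have hfix : π ω * t * (π ω)⁻¹ = s i ↔ (π ω)⁻¹ * s i * π ω = t := by
      constructor <;> intro h
      · rw [← h]; group
      · rw [← h]; group
    rw [map_cons, prod_cons, Equiv.Perm.mul_apply, ih, signPerm_apply, wordProd_cons,
      rightInvSeq, count_cons, hfix]
    simp only [beq_iff_eq]
    refine Prod.ext (by simp [mul_assoc, inv_simple]) ?_
    split_ifs <;> simp [pow_succ]

theorem even_count_rightInvSeq_braid (i i' : B) (t : W) :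
    Even ((ris (alternatingWord i i' (2 * M i i'))).count t) := by
  rw [(cs.rightInvSeq_alternatingWord_perm i i' _).count_eq, two_mul, range_add, map_append,
    map_map, count_append]
  have hperiodic : ((fun k => s i' * (s i * s i') ^ k) ∘ (M i i' + ·)) =
      fun k => s i' * (s i * s i') ^ k := by
    ext k
    simp [pow_add, simple_mul_simple_pow]
  rw [hperiodic]
  exact ⟨_, rfl⟩

end DecidableEq

theorem prod_map_alternatingWord_two_mul {G : Type*} [Monoid G] (f : B → G) (i i' : B) (m : ℕ) :
    ((alternatingWord i i' (2 * m)).map f).prod = (f i * f i') ^ m := by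
  induction m with
  | zero => simp [alternatingWord]
  | succ m ih =>
    rw [mul_add_one, alternatingWord_succ', alternatingWord_succ',
      if_neg (Nat.not_even_two_mul_add_one m), if_pos (even_two_mul m), map_cons, map_cons,
      prod_cons, prod_cons, ih, pow_succ', mul_assoc]

theorem isLiftable_signPerm : M.IsLiftable cs.signPerm := by
  classical
  intro i i'
  have hbraid : π (alternatingWord i i' (2 * M i i')) = 1 := by
    rw [prod_alternatingWord_eq_mul_pow, if_pos (even_two_mul _),
      Nat.mul_div_cancel_left _ two_pos, one_mul, simple_mul_simple_pow]
  ext ⟨t, ε⟩ : 1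
  rw [← prod_map_alternatingWord_two_mul, prod_map_signPerm_apply, hbraid,
    (cs.even_count_rightInvSeq_braid i i' t).neg_one_pow]
  simp

noncomputable def signHom : W →* Equiv.Perm (W × ℤˣ) := cs.lift ⟨_, cs.isLiftable_signPerm⟩

noncomputable def reflSign (w t : W) : ℤˣ := (cs.signHom w (t, 1)).2

theorem signHom_simple (i : B) : cs.signHom (s i) = cs.signPerm i :=
  cs.lift_apply_simple cs.isLiftable_signPerm i

theorem signHom_wordProd (ω : List B) : cs.signHom (π ω) = (ω.map cs.signPerm).prod := by
  rw [wordProd, map_list_prod, map_map]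
  exact congrArg prod (map_congr_left fun i _ => cs.signHom_simple i)

theorem reflSign_wordProd [DecidableEq W] (ω : List B) (t : W) :
    cs.reflSign (π ω) t = (-1) ^ (ris ω).count t := by
  rw [reflSign, signHom_wordProd, prod_map_signPerm_apply, mul_one]

theorem signHom_apply (w t : W) (ε : ℤˣ) :
    cs.signHom w (t, ε) = (w * t * w⁻¹, cs.reflSign w t * ε) := by
  classical
  obtain ⟨ω, rfl⟩ := cs.wordProd_surjective w
  rw [signHom_wordProd, prod_map_signPerm_apply, reflSign_wordProd]

theorem signHom_self {t : W} (ht : cs.IsReflection t) (ε : ℤˣ) :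
    cs.signHom t (t, ε) = (t, -ε) := by
  obtain ⟨u, i, rfl⟩ := ht
  have hconj : u⁻¹ * (u * s i * u⁻¹) * u⁻¹⁻¹ = s i := by group
  have hinv : cs.reflSign u (s i) * cs.reflSign u⁻¹ (u * s i * u⁻¹) = 1 := by
    have h := congrArg Prod.snd (congrFun (congrArg DFunLike.coe (map_mul cs.signHom u u⁻¹).symm)
      (u * s i * u⁻¹, 1))
    rw [mul_inv_cancel, map_one, Equiv.Perm.mul_apply, signHom_apply _ u⁻¹, hconj, signHom_apply,
      mul_one] at h
    simpa using h
  rw [map_mul, map_mul, signHom_simple, Equiv.Perm.mul_apply, Equiv.Perm.mul_apply,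
    signHom_apply _ u⁻¹, hconj, signPerm_apply, if_pos rfl, simple_mul_simple_self, one_mul,
    signHom_apply, mul_neg, ← mul_assoc, hinv, one_mul]

theorem reflSign_mul_self {t : W} (ht : cs.IsReflection t) (w : W) :
    cs.reflSign (w * t) t = -cs.reflSign w t := by
  rw [reflSign, map_mul, Equiv.Perm.mul_apply, signHom_self cs ht, signHom_apply, mul_neg_one]

theorem mem_rightInvSeq_of_reflSign_eq_neg_one {ω : List B} {t : W}
    (h : cs.reflSign (π ω) t = -1) : t ∈ ris ω := by
  classical
  rw [reflSign_wordProd] at h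
  rw [← count_pos_iff, Nat.pos_iff_ne_zero]
  intro h0
  rw [h0, pow_zero] at h
  exact absurd h (by decide)

theorem reflSign_eq_neg_one_iff {t : W} (ht : cs.IsReflection t) (w : W) :
    cs.reflSign w t = -1 ↔ ℓ (w * t) < ℓ w := by
  have hdesc : ∀ w, cs.reflSign w t = -1 → ℓ (w * t) < ℓ w := by
    intro w h
    obtain ⟨ω, hω, rfl⟩ := cs.exists_isReduced w
    exact (cs.isRightInversion_of_mem_rightInvSeq hω
      (cs.mem_rightInvSeq_of_reflSign_eq_neg_one h)).2
  refine ⟨hdesc w, fun hlt => ?_⟩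
  rcases Int.units_eq_one_or (cs.reflSign w t) with h1 | h1
  · have hasc := hdesc (w * t) (by rw [reflSign_mul_self cs ht, h1])
    rw [mul_assoc, ht.mul_self, mul_one] at hasc
    omega
  · exact h1

theorem mem_rightInvSeq_of_isRightInversion {ω : List B} {t : W}
    (h : cs.IsRightInversion (π ω) t) : t ∈ ris ω :=
  cs.mem_rightInvSeq_of_reflSign_eq_neg_one ((cs.reflSign_eq_neg_one_iff h.1 _).2 h.2)

theorem mem_leftInvSeq_of_isLeftInversion {ω : List B} {t : W}
    (h : cs.IsLeftInversion (π ω) t) : t ∈ lis ω := by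
  have h' := cs.mem_rightInvSeq_of_isRightInversion (ω := ω.reverse)
    (by rwa [wordProd_reverse, isRightInversion_inv_iff])
  rwa [rightInvSeq_reverse, mem_reverse] at h'

theorem exists_eraseIdx_of_isLeftInversion {ω : List B} {t : W}
    (h : cs.IsLeftInversion (π ω) t) : ∃ j < ω.length, t * π ω = π (ω.eraseIdx j) := by
  obtain ⟨j, hj, rfl⟩ := getElem_of_mem (cs.mem_leftInvSeq_of_isLeftInversion h)
  refine ⟨j, by simpa using hj, ?_⟩
  rw [← getD_leftInvSeq_mul_wordProd, getD_eq_getElem]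

theorem exists_reduced_sublist (ω : List B) :
    ∃ ω', ω' <+ ω ∧ cs.IsReduced ω' ∧ π ω' = π ω := by
  induction ω with
  | nil => exact ⟨[], .refl _, by simp [IsReduced], rfl⟩
  | cons c κ ih =>
    obtain ⟨κ', hsub, hred, hprod⟩ := ih
    rw [wordProd_cons, ← hprod]
    rcases cs.length_simple_mul (π κ') c with hup | hdown
    · refine ⟨c :: κ', hsub.cons_cons c, ?_, wordProd_cons ..⟩
      rw [IsReduced, wordProd_cons, hup, hred, length_cons]
    · obtain ⟨j, hj, herase⟩ := cs.exists_eraseIdx_of_isLeftInversion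
        (ω := κ') ⟨cs.isReflection_simple c, by omega⟩
      refine ⟨κ'.eraseIdx j, ((eraseIdx_sublist _ _).trans hsub).trans (sublist_cons_self _ _),
        ?_, herase.symm⟩
      rw [IsReduced, ← herase, length_eraseIdx_of_lt hj, ← hred]
      omega

section Parabolic

variable {J : Set B}

theorem wordProd_mem_closure {ω : List B} (hω : ∀ i ∈ ω, i ∈ J) :
    π ω ∈ Subgroup.closure (cs.simple '' J) :=
  Subgroup.list_prod_mem _ <| by
    simpa using fun i hi => Subgroup.subset_closure (Set.mem_image_of_mem _ (hω i hi))

theorem exists_reduced_word_of_mem_closure {w : W} (hw : w ∈ Subgroup.closure (cs.simple '' J)) :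
    ∃ ω : List B, (∀ i ∈ ω, i ∈ J) ∧ cs.IsReduced ω ∧ π ω = w := by
  obtain ⟨ω, hωJ, rfl⟩ : ∃ ω : List B, (∀ i ∈ ω, i ∈ J) ∧ π ω = w := by
    induction hw using Subgroup.closure_induction with
    | mem _ hx =>
      obtain ⟨i, hi, rfl⟩ := hx
      exact ⟨[i], by simpa using hi, wordProd_singleton ..⟩
    | one => exact ⟨[], by simp, wordProd_nil ..⟩
    | mul _ _ _ _ ihx ihy =>
      obtain ⟨ω₁, h₁, rfl⟩ := ihx
      obtain ⟨ω₂, h₂, rfl⟩ := ihy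
      exact ⟨ω₁ ++ ω₂, by simpa using fun i hi => hi.elim (h₁ i) (h₂ i), wordProd_append ..⟩
    | inv _ _ ih =>
      obtain ⟨ω, h, rfl⟩ := ih
      exact ⟨ω.reverse, by simpa using h, wordProd_reverse ..⟩
  obtain ⟨ω', hsub, hred, hprod⟩ := cs.exists_reduced_sublist ω
  exact ⟨ω', fun i hi => hωJ i (hsub.subset hi), hred, hprod⟩

theorem length_prod_le {l : List W} (hl : ∀ g ∈ l, g ∈ Set.range cs.simple) :
    ℓ l.prod ≤ l.length := by
  induction l with
  | nil => simp
  | cons g l ih =>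
    obtain ⟨i, rfl⟩ := hl g mem_cons_self
    calc ℓ (s i * l.prod) ≤ ℓ (s i) + ℓ l.prod := cs.length_mul_le _ _
      _ ≤ (s i :: l).length := by
        rw [length_simple, length_cons, add_comm]
        exact Nat.add_le_add_right (ih fun g hg => hl g (mem_cons_of_mem _ hg)) 1

theorem genLength_image_simple {w : W} (hw : w ∈ Subgroup.closure (cs.simple '' J)) :
    genLength (cs.simple '' J) w = ℓ w := by
  obtain ⟨ω, hωJ, hred, rfl⟩ := cs.exists_reduced_word_of_mem_closure hw
  refine le_antisymm (Nat.sInf_le ⟨ω.map cs.simple, ?_, by simp [hred.eq], rfl⟩) ?_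
  · simpa using fun i hi => ⟨i, hωJ i hi, rfl⟩
  · refine le_csInf ⟨_, ω.map cs.simple, ?_, rfl, rfl⟩ ?_
    · simpa using fun i hi => ⟨i, hωJ i hi, rfl⟩
    · rintro _ ⟨l, hl, rfl, hprod⟩
      rw [← hprod]
      exact cs.length_prod_le fun g hg => Set.image_subset_range _ _ (hl g hg)

theorem genLength_range_simple (w : W) : genLength (Set.range cs.simple) w = ℓ w := by
  rw [← Set.image_univ]
  exact cs.genLength_image_simple (by simp [subgroup_closure_range_simple])

theorem isReflection_of_mem_genReflections {t : W} (ht : t ∈ genReflections (cs.simple '' J)) :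
    cs.IsReflection t := by
  obtain ⟨u, -, _, ⟨i, -, rfl⟩, rfl⟩ := ht
  exact ⟨u, i, rfl⟩

theorem genBruhatStep_image_simple_iff {x y : W} :
    genBruhatStep (cs.simple '' J) x y ↔ x ∈ Subgroup.closure (cs.simple '' J) ∧
      y ∈ Subgroup.closure (cs.simple '' J) ∧ ℓ x < ℓ y ∧
      x * y⁻¹ ∈ genReflections (cs.simple '' J) := by
  refine ⟨fun h => ?_, fun ⟨hx, hy, hlt, hr⟩ => ?_⟩
  · obtain ⟨hx, hy⟩ := h.mem_closure
    rw [genBruhatStep, cs.genLength_image_simple hx, cs.genLength_image_simple hy] at h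
    exact ⟨hx, hy, h⟩
  · rw [genBruhatStep, cs.genLength_image_simple hx, cs.genLength_image_simple hy]
    exact ⟨hlt, hr⟩

theorem genBruhatLE_image_simple_mono {K : Set B} (hJK : J ⊆ K) {x y : W}
    (h : genBruhatLE (cs.simple '' J) x y) : genBruhatLE (cs.simple '' K) x y := by
  refine Relation.ReflTransGen.mono (fun b c hbc => ?_) x y h
  have hJK' := Set.image_mono (f := cs.simple) hJK
  obtain ⟨hb, hc, hlt, hr⟩ := cs.genBruhatStep_image_simple_iff.1 hbc
  exact cs.genBruhatStep_image_simple_iff.2 ⟨Subgroup.closure_mono hJK' hb,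
    Subgroup.closure_mono hJK' hc, hlt, genReflections_mono hJK' hr⟩

theorem exists_sublist_of_genBruhatLE {x y : W} (h : genBruhatLE (cs.simple '' J) x y)
    {ω : List B} (hω : π ω = y) : ∃ ω', ω' <+ ω ∧ π ω' = x := by
  induction h generalizing ω with
  | refl => exact ⟨ω, .refl ω, hω⟩
  | tail _ hstep ih =>
    obtain ⟨-, -, hlt, hr⟩ := cs.genBruhatStep_image_simple_iff.1 hstep
    subst hω
    obtain ⟨j, -, herase⟩ := cs.exists_eraseIdx_of_isLeftInversion (ω := ω)
      ⟨cs.isReflection_of_mem_genReflections hr, by rwa [inv_mul_cancel_right]⟩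
    rw [inv_mul_cancel_right] at herase
    obtain ⟨ω', hsub, hprod⟩ := ih herase.symm
    exact ⟨ω', hsub.trans (eraseIdx_sublist ω j), hprod⟩

/-- Exchanging `t` in the word `α ++ [i]`, with `α` a reduced word for `v * s i`, can only
delete the last letter. -/
theorem mul_mul_simple_eq {t v : W} {i : B} (ht : cs.IsReflection t) (htv : ℓ (t * v) < ℓ v)
    (hle : ℓ (v * s i) ≤ ℓ (t * v * s i)) : t * v * s i = v := by
  obtain ⟨α, hα, hαv⟩ := cs.exists_isReduced (v * s i)
  have hv : π (α ++ [i]) = v := by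
    rw [wordProd_append, ← hαv, wordProd_singleton, simple_mul_simple_cancel_right]
  obtain ⟨j, hj, herase⟩ := cs.exists_eraseIdx_of_isLeftInversion (ω := α ++ [i])
    ⟨ht, by rwa [hv]⟩
  rw [hv] at herase
  rw [length_append, length_singleton] at hj
  rcases Nat.lt_or_ge j α.length with hjα | hjα
  · rw [eraseIdx_append_of_lt_length hjα, wordProd_append, wordProd_singleton,
      ← mul_inv_eq_iff_eq_mul, inv_simple] at herase
    have hshort := cs.length_wordProd_le (α.eraseIdx j)
    rw [length_eraseIdx_of_lt hjα, ← herase] at hshort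
    have hαlen : ℓ (v * s i) = α.length := by rw [hαv, hα.eq]
    omega
  · rw [eraseIdx_append_of_length_le hjα, show j - α.length = 0 by omega, eraseIdx_cons_zero,
      append_nil, ← hαv] at herase
    rw [herase, simple_mul_simple_cancel_right]

theorem genBruhatLE_mul_simple_or {u v : W} (h : genBruhatLE (cs.simple '' J) u v) {i : B}
    (hi : i ∈ J) : genBruhatLE (cs.simple '' J) (u * s i) v ∨
      genBruhatLE (cs.simple '' J) (u * s i) (v * s i) := by
  induction h with
  | refl => exact .inr .refl
  | @tail z v _ hstep ih =>
    obtain ⟨hz, hv, hlt, hr⟩ := cs.genBruhatStep_image_simple_iff.1 hstep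
    rcases ih with ih | ih
    · exact .inl (ih.tail hstep)
    have hsi : s i ∈ Subgroup.closure (cs.simple '' J) := Subgroup.subset_closure ⟨i, hi, rfl⟩
    by_cases hzv : ℓ (z * s i) < ℓ (v * s i)
    · refine .inr (ih.tail (cs.genBruhatStep_image_simple_iff.2
        ⟨mul_mem hz hsi, mul_mem hv hsi, hzv, ?_⟩))
      rwa [show z * s i * (v * s i)⁻¹ = z * v⁻¹ by group]
    · have heq := cs.mul_mul_simple_eq (t := z * v⁻¹) (v := v) (i := i)
        (cs.isReflection_of_mem_genReflections hr) (by rwa [inv_mul_cancel_right])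
        (by rw [inv_mul_cancel_right]; omega)
      rw [inv_mul_cancel_right] at heq
      exact .inl (heq ▸ ih)

theorem genBruhatLE_wordProd_of_sublist {ω : List B} (hωJ : ∀ i ∈ ω, i ∈ J)
    (hω : cs.IsReduced ω) {ω' : List B} (h : ω' <+ ω) :
    genBruhatLE (cs.simple '' J) (π ω') (π ω) := by
  induction ω using reverseRecOn generalizing ω' with
  | nil => rw [sublist_nil.1 h]; exact .refl
  | append_singleton κ i ih =>
    have hκJ : ∀ j ∈ κ, j ∈ J := fun j hj => hωJ j (mem_append_left _ hj)
    have hi : i ∈ J := hωJ i (mem_append_right _ (mem_singleton_self i))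
    have hκ : cs.IsReduced κ := by simpa using hω.take κ.length
    have hstep : genBruhatLE (cs.simple '' J) (π κ) (π (κ ++ [i])) := by
      refine .single (cs.genBruhatStep_image_simple_iff.2 ⟨cs.wordProd_mem_closure hκJ,
        cs.wordProd_mem_closure hωJ, ?_, π κ, cs.wordProd_mem_closure hκJ, s i, ⟨i, hi, rfl⟩, ?_⟩)
      · rw [hω.eq, hκ.eq, length_append, length_singleton]
        exact Nat.lt_succ_self _
      · rw [wordProd_append, wordProd_singleton, mul_inv_rev, inv_simple, mul_assoc]
    obtain ⟨l, l', rfl, hl, hl'⟩ := sublist_append_iff.1 h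
    rcases sublist_singleton.1 hl' with rfl | rfl
    · rw [append_nil]
      exact (ih hκJ hκ hl).trans hstep
    · rw [wordProd_append, wordProd_singleton]
      rcases cs.genBruhatLE_mul_simple_or (ih hκJ hκ hl) hi with hle | hle
      · exact hle.trans hstep
      · rwa [wordProd_append, wordProd_singleton]

theorem genBruhatLE_image_simple_iff {x y : W} (hy : y ∈ Subgroup.closure (cs.simple '' J)) :
    genBruhatLE (cs.simple '' J) x y ↔ genBruhatLE (Set.range cs.simple) x y := by
  rw [← Set.image_univ]
  refine ⟨cs.genBruhatLE_image_simple_mono (Set.subset_univ J), fun h => ?_⟩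
  obtain ⟨ω, hωJ, hω, rfl⟩ := cs.exists_reduced_word_of_mem_closure hy
  obtain ⟨ω', hsub, rfl⟩ := cs.exists_sublist_of_genBruhatLE h rfl
  exact cs.genBruhatLE_wordProd_of_sublist hωJ hω hsub

theorem one_genBruhatLE {w : W} (hw : w ∈ Subgroup.closure (cs.simple '' J)) :
    genBruhatLE (cs.simple '' J) 1 w := by
  obtain ⟨ω, hωJ, hω, rfl⟩ := cs.exists_reduced_word_of_mem_closure hw
  exact cs.genBruhatLE_wordProd_of_sublist hωJ hω (nil_sublist ω)

theorem eq_one_of_genBruhatLE_one {x : W} (h : genBruhatLE (cs.simple '' J) x 1) : x = 1 := by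
  obtain ⟨ω', hsub, rfl⟩ := cs.exists_sublist_of_genBruhatLE h (ω := []) rfl
  rw [sublist_nil.1 hsub, wordProd_nil]

end Parabolic

section Coset

variable (J : Set B)

def IsMinimalCosetRep (x : W) : Prop :=
  ∀ g ∈ Subgroup.closure (cs.simple '' J), ℓ x ≤ ℓ (g * x)

theorem exists_mul_isMinimalCosetRep (x : W) :
    ∃ a ∈ Subgroup.closure (cs.simple '' J), cs.IsMinimalCosetRep J (a * x) := by
  obtain ⟨a, ha, hmin⟩ := exists_minimalFor_of_wellFoundedLT
    (· ∈ Subgroup.closure (cs.simple '' J)) (fun a => ℓ (a * x)) ⟨1, one_mem _⟩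
  refine ⟨a, ha, fun g hg => ?_⟩
  rw [← mul_assoc]
  exact le_of_not_gt fun hlt => hlt.not_ge (hmin (mul_mem hg ha) hlt.le)

variable {J}

theorem IsMinimalCosetRep.genBruhatLE_of_mul {x a b : W} (hx : cs.IsMinimalCosetRep J x)
    (ha : a ∈ Subgroup.closure (cs.simple '' J)) (hb : b ∈ Subgroup.closure (cs.simple '' J))
    (h : genBruhatLE (Set.range cs.simple) (a * x) (b * x)) :
    genBruhatLE (cs.simple '' J) a b := by
  obtain ⟨β, hβJ, hβ, rfl⟩ := cs.exists_reduced_word_of_mem_closure hb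
  obtain ⟨ρ, hρ, rfl⟩ := cs.exists_isReduced x
  rw [← Set.image_univ] at h
  obtain ⟨_, hsub, hprod⟩ := cs.exists_sublist_of_genBruhatLE h (wordProd_append cs β ρ)
  obtain ⟨l, l', rfl, hl, hl'⟩ := sublist_append_iff.1 hsub
  rw [wordProd_append] at hprod
  have hl'_eq : π l' = ((π l)⁻¹ * a) * π ρ := by rw [mul_assoc, ← hprod, inv_mul_cancel_left]
  have hlJ : π l ∈ Subgroup.closure (cs.simple '' J) :=
    cs.wordProd_mem_closure fun i hi => hβJ i (hl.subset hi)
  have hcoset := hx _ (mul_mem (inv_mem hlJ) ha)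
  rw [← hl'_eq, hρ.eq] at hcoset
  have hl'ρ : l' = ρ :=
    hl'.eq_of_length (hl'.length_le.antisymm (hcoset.trans (cs.length_wordProd_le l')))
  rw [hl'ρ, mul_left_inj] at hprod
  exact hprod ▸ cs.genBruhatLE_wordProd_of_sublist hβJ hβ hl

end Coset

end CoxeterSystem

namespace IsPatternMap

variable {B : Type*} {M : CoxeterMatrix B} (cs : CoxeterSystem M W) {J : Set B} {φ : W → W}

theorem apply_mul_eq (hφ : IsPatternMap (Set.range cs.simple) (Subgroup.closure (cs.simple '' J))
      (cs.simple '' J) φ) {x₀ : W} (hx₀ : cs.IsMinimalCosetRep J x₀) {g : W}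
    (hg : g ∈ Subgroup.closure (cs.simple '' J)) : φ (g * x₀) = g := by
  obtain ⟨hmem, hequiv, hpattern⟩ := hφ
  have hg₀ := hmem x₀
  have hbelow : genBruhatLE (Set.range cs.simple) ((φ x₀)⁻¹ * x₀) (1 * x₀) := by
    have h := hpattern ((φ x₀)⁻¹ * x₀) _ hg₀ (by
      rw [hequiv _ (inv_mem hg₀), mul_inv_cancel_left, inv_mul_cancel]
      exact cs.one_genBruhatLE hg₀)
    convert h using 1
    rw [one_mul, mul_inv_cancel_left]
  have := cs.eq_one_of_genBruhatLE_one (hx₀.genBruhatLE_of_mul cs (inv_mem hg₀) (one_mem _) hbelow)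
  rw [hequiv g hg, inv_eq_one.1 this, mul_one]

theorem genBruhatLE_iff (hφ : IsPatternMap (Set.range cs.simple)
      (Subgroup.closure (cs.simple '' J)) (cs.simple '' J) φ) (x : W) {w : W}
    (hw : w ∈ Subgroup.closure (cs.simple '' J)) :
    genBruhatLE (cs.simple '' J) (φ x) (φ (w * x)) ↔
      genBruhatLE (Set.range cs.simple) x (w * x) := by
  refine ⟨hφ.2.2 x w hw, fun h => ?_⟩
  obtain ⟨a, ha, hax⟩ := cs.exists_mul_isMinimalCosetRep J x
  obtain ⟨x₀, hx₀, rfl⟩ : ∃ x₀, cs.IsMinimalCosetRep J x₀ ∧ x = a⁻¹ * x₀ :=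
    ⟨a * x, hax, by group⟩
  have hwa : w * a⁻¹ ∈ Subgroup.closure (cs.simple '' J) := mul_mem hw (inv_mem ha)
  rw [← mul_assoc] at h ⊢
  rw [hφ.apply_mul_eq cs hx₀ (inv_mem ha), hφ.apply_mul_eq cs hx₀ hwa]
  exact hx₀.genBruhatLE_of_mul cs (inv_mem ha) hwa h

end IsPatternMap

theorem statement3_general {B : Type*} {M : CoxeterMatrix B} (cs : CoxeterSystem M W)
    (S : Set W) (hS : S = Set.range cs.simple)
    (I : Set B) (S' : Set W) (hS' : S' = cs.simple '' I)
    (W' : Subgroup W) (hW' : W' = Subgroup.closure S') :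
    (∀ w ∈ W', genLength S' w = genLength S w) ∧
    (∀ x ∈ W', ∀ y ∈ W', (genBruhatLE S' x y ↔ genBruhatLE S x y)) ∧
    (∀ φ : W → W, IsPatternMap S W' S' φ →
      ∀ x : W, ∀ w ∈ W', (genBruhatLE S' (φ x) (φ (w * x)) ↔ genBruhatLE S x (w * x))) := by
  subst hS hS' hW'
  refine ⟨fun w hw => ?_, fun x _ y hy => cs.genBruhatLE_image_simple_iff hy,
    fun φ hφ x w hw => hφ.genBruhatLE_iff cs x hw⟩
  rw [cs.genLength_image_simple hw, cs.genLength_range_simple]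

/-- Let `(W,S)` be a finite Coxeter system and `W' = W_I` a standard
parabolic subgroup, `I ⊆ S`.  Then the length function of `(W_I, I)` is the restriction
to `W_I` of the length function of `W`, the Bruhat–Chevalley order of `(W_I, I)` is the
restriction to `W_I` of the Bruhat–Chevalley order of `W`, and the pattern map
`φ : W → W_I` satisfies: for all `x ∈ W` and `w ∈ W_I`,
`φ(x) ≤' φ(wx)` if and only if `x ≤ wx`. -/
theorem statement3 {B : Type*} {M : CoxeterMatrix B} (cs : CoxeterSystem M W)
    [Finite W]
    (S : Set W) (hS : S = Set.range cs.simple)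
    (I : Set B) (S' : Set W) (hS' : S' = cs.simple '' I)
    (W' : Subgroup W) (hW' : W' = Subgroup.closure S') :
    (∀ w ∈ W', genLength S' w = genLength S w) ∧
    (∀ x ∈ W', ∀ y ∈ W', (genBruhatLE S' x y ↔ genBruhatLE S x y)) ∧
    (∀ φ : W → W, IsPatternMap S W' S' φ →
      ∀ x : W, ∀ w ∈ W', (genBruhatLE S' (φ x) (φ (w * x)) ↔ genBruhatLE S x (w * x))) :=
  statement3_general cs S hS I S' hS' W' hW'
end

section
/- Let (W,S) be a finite Coxeter system and W' ⊆ W a parabolic subgroup. Then for every x ∈ W, the right coset W'x contains a unique element z such that z ≤ wz for all w ∈ W' (namely the unique element of W'x with φ(z) = 1, where φ is the pattern map); in particular z is the unique minimal element of W'x in the Bruhat–Chevalley order of W. -/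
/-!
Write `z := φ(x)⁻¹ x`; equivariance of `φ` gives `φ(z) = 1`, and an element of `W'x` with
`φ = 1` is determined by the coset. For `w ∈ W'` we have `φ(wz) = w`, and `1 ≤' w` in `W'`
because every element of a group generated by an inverse-closed set lies Bruhat-above `1`
(peel the last letter off a reduced word). The defining property of the pattern map turns
`φ(z) ≤' φ(wz)` into `z ≤ wz`, so `z` is the minimum of `W'x`; uniqueness of minimal elements
is antisymmetry, as every Bruhat step strictly increases length.
-/

open Polynomial

variable {W : Type*} [Group W]

section BruhatOrder

variable {T : Set W}

lemma genLength_prod_le_length {l : List W} (hl : ∀ g ∈ l, g ∈ T) :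
    genLength T l.prod ≤ l.length :=
  Nat.sInf_le ⟨l, hl, rfl, rfl⟩

lemma exists_list_length_eq_genLength (hT : T⁻¹ ⊆ T) {w : W} (hw : w ∈ Subgroup.closure T) :
    ∃ l : List W, (∀ g ∈ l, g ∈ T) ∧ l.length = genLength T w ∧ l.prod = w := by
  have hw' : w ∈ Submonoid.closure T := by
    rwa [← Set.union_eq_left.2 hT, ← Subgroup.closure_toSubmonoid]
  obtain ⟨l, hl, rfl⟩ := Submonoid.exists_list_of_mem_closure hw'
  exact Nat.sInf_mem
    (s := {n | ∃ l' : List W, (∀ g ∈ l', g ∈ T) ∧ l'.length = n ∧ l'.prod = l.prod})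
    ⟨l.length, l, hl, rfl, rfl⟩

lemma exists_mul_genLength_lt (hT : T⁻¹ ⊆ T) {w : W} (hw : w ∈ Subgroup.closure T)
    (hw1 : w ≠ 1) :
    ∃ v ∈ Subgroup.closure T, ∃ t ∈ T, w = v * t ∧ genLength T v < genLength T w := by
  obtain ⟨l, hl, hlen, rfl⟩ := exists_list_length_eq_genLength hT hw
  obtain rfl | ⟨l', t, rfl⟩ := l.eq_nil_or_concat'
  · exact absurd List.prod_nil hw1
  simp only [List.mem_append, List.mem_singleton] at hl
  have hl' : ∀ g ∈ l', g ∈ T := fun g hg => hl g (.inl hg)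
  refine ⟨l'.prod, list_prod_mem fun g hg => Subgroup.subset_closure (hl' g hg),
    t, hl t (.inr rfl), by simp, ?_⟩
  calc genLength T l'.prod ≤ l'.length := genLength_prod_le_length hl'
    _ < genLength T (l' ++ [t]).prod := by rw [← hlen]; simp

theorem genBruhatLE_one_of_mem_closure (hT : T⁻¹ ⊆ T) {w : W}
    (hw : w ∈ Subgroup.closure T) : genBruhatLE T 1 w := by
  induction h : genLength T w using Nat.strong_induction_on generalizing w with
  | _ n ih =>
    by_cases hw1 : w = 1
    · exact hw1 ▸ .refl
    obtain ⟨v, hv, t, ht, rfl, hlt⟩ := exists_mul_genLength_lt hT hw hw1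
    exact (ih _ (h ▸ hlt) hv rfl).tail
      ⟨hlt, v, hv, t⁻¹, hT (Set.inv_mem_inv.2 ht), by group⟩

lemma eq_or_genLength_lt_of_genBruhatLE {a b : W} (h : genBruhatLE T a b) :
    a = b ∨ genLength T a < genLength T b := by
  induction h with
  | refl => exact .inl rfl
  | tail _ step ih =>
    rcases ih with rfl | lt
    · exact .inr step.1
    · exact .inr (lt.trans step.1)

theorem genBruhatLE_antisymm {a b : W} (hab : genBruhatLE T a b) (hba : genBruhatLE T b a) :
    a = b := by
  rcases eq_or_genLength_lt_of_genBruhatLE hab with rfl | lt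
  · rfl
  rcases eq_or_genLength_lt_of_genBruhatLE hba with rfl | lt'
  · rfl
  omega

end BruhatOrder

lemma CoxeterSystem.inv_conj_image_simple_subset {B : Type*} {M : CoxeterMatrix B}
    (cs : CoxeterSystem M W) (g : W) (I : Set B) :
    ((fun t => g * t * g⁻¹) '' (cs.simple '' I))⁻¹ ⊆
      (fun t => g * t * g⁻¹) '' (cs.simple '' I) := by
  rintro t ⟨_, ⟨i, hi, rfl⟩, ht⟩
  refine ⟨_, ⟨i, hi, rfl⟩, ?_⟩
  rw [← inv_inv t, ← ht]
  simp [mul_assoc]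

lemma mul_inv_mem_of_mul_inv_mem {H : Subgroup W} {a b x : W} (ha : a * x⁻¹ ∈ H)
    (hb : b * x⁻¹ ∈ H) : a * b⁻¹ ∈ H := by
  simpa [mul_assoc] using mul_mem ha (inv_mem hb)

namespace IsPatternMap

variable {S S' : Set W} {W' : Subgroup W} {φ : W → W}

lemma apply_inv_apply_mul_self (hφ : IsPatternMap S W' S' φ) (x : W) :
    φ ((φ x)⁻¹ * x) = 1 := by
  rw [hφ.2.1 _ (inv_mem (hφ.1 x)) x, inv_mul_cancel]

lemma eq_of_apply_eq_one (hφ : IsPatternMap S W' S' φ) {z z' : W} (hzz' : z' * z⁻¹ ∈ W')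
    (hz : φ z = 1) (hz' : φ z' = 1) : z' = z := by
  have h := hφ.2.1 _ hzz' z
  rw [inv_mul_cancel_right, hz', hz, mul_one] at h
  exact mul_inv_eq_one.1 h.symm

lemma le_mul_of_apply_eq_one (hφ : IsPatternMap S (Subgroup.closure S') S' φ)
    (hS' : S'⁻¹ ⊆ S') {z : W} (hz : φ z = 1) {w : W} (hw : w ∈ Subgroup.closure S') :
    genBruhatLE S z (w * z) :=
  hφ.2.2 z w hw <| by
    rw [hφ.2.1 w hw, hz, mul_one]
    exact genBruhatLE_one_of_mem_closure hS' hw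

end IsPatternMap

theorem statement4_general {B : Type*} {M : CoxeterMatrix B} (cs : CoxeterSystem M W)
    (S : Set W)
    (I : Set B) (g : W) (S' : Set W)
    (hS' : S' = (fun t => g * t * g⁻¹) '' (cs.simple '' I))
    (W' : Subgroup W) (hW' : W' = Subgroup.closure S')
    (φ : W → W) (hφ : IsPatternMap S W' S' φ)
    (x : W) :
    ∃ z : W, z * x⁻¹ ∈ W' ∧ (∀ w ∈ W', genBruhatLE S z (w * z)) ∧
      (∀ z' : W, z' * x⁻¹ ∈ W' ∧ (∀ w ∈ W', genBruhatLE S z' (w * z')) → z' = z) ∧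
      φ z = 1 ∧ (∀ z' : W, z' * x⁻¹ ∈ W' → φ z' = 1 → z' = z) ∧
      (∀ z' : W, z' * x⁻¹ ∈ W' → genBruhatLE S z z') ∧
      (∀ z' : W, z' * x⁻¹ ∈ W' → (∀ z'' : W, z'' * x⁻¹ ∈ W' → genBruhatLE S z' z'') →
        z' = z) := by
  subst hW'
  have hS'inv : S'⁻¹ ⊆ S' := hS' ▸ cs.inv_conj_image_simple_subset g I
  have hz : φ ((φ x)⁻¹ * x) = 1 := hφ.apply_inv_apply_mul_self x
  set z := (φ x)⁻¹ * x
  have hzx : z * x⁻¹ ∈ Subgroup.closure S' := by simpa [z] using inv_mem (hφ.1 x)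
  have hmin : ∀ z', z' * x⁻¹ ∈ Subgroup.closure S' → genBruhatLE S z z' := fun z' hz' => by
    simpa using hφ.le_mul_of_apply_eq_one hS'inv hz (mul_inv_mem_of_mul_inv_mem hz' hzx)
  refine ⟨z, hzx, fun w hw => hφ.le_mul_of_apply_eq_one hS'inv hz hw, ?_, hz, ?_, hmin, ?_⟩
  · rintro z' ⟨hz'x, hz'⟩
    exact genBruhatLE_antisymm (by simpa using hz' _ (mul_inv_mem_of_mul_inv_mem hzx hz'x))
      (hmin z' hz'x)
  · exact fun z' hz'x hφz' =>
      hφ.eq_of_apply_eq_one (mul_inv_mem_of_mul_inv_mem hz'x hzx) hz hφz'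
  · exact fun z' hz'x hz' => genBruhatLE_antisymm (hz' z hzx) (hmin z' hz'x)

/-- Let `(W,S)` be a finite Coxeter system and `W' = g W_I g⁻¹` a
parabolic subgroup with pattern map `φ`.  Then for every `x ∈ W`, the right coset `W'x`
contains a unique element `z` with `z ≤ wz` for all `w ∈ W'`; it is the unique element
of `W'x` with `φ(z) = 1`, and it is the unique minimal element of `W'x` in the
Bruhat–Chevalley order of `W`. -/
theorem statement4 {B : Type*} {M : CoxeterMatrix B} (cs : CoxeterSystem M W)
    [Finite W]
    (S : Set W) (hS : S = Set.range cs.simple)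
    (I : Set B) (g : W) (S' : Set W)
    (hS' : S' = (fun t => g * t * g⁻¹) '' (cs.simple '' I))
    (W' : Subgroup W) (hW' : W' = Subgroup.closure S')
    (φ : W → W) (hφ : IsPatternMap S W' S' φ)
    (x : W) :
    ∃ z : W, z * x⁻¹ ∈ W' ∧ (∀ w ∈ W', genBruhatLE S z (w * z)) ∧
      (∀ z' : W, z' * x⁻¹ ∈ W' ∧ (∀ w ∈ W', genBruhatLE S z' (w * z')) → z' = z) ∧
      φ z = 1 ∧ (∀ z' : W, z' * x⁻¹ ∈ W' → φ z' = 1 → z' = z) ∧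
      (∀ z' : W, z' * x⁻¹ ∈ W' → genBruhatLE S z z') ∧
      (∀ z' : W, z' * x⁻¹ ∈ W' → (∀ z'' : W, z'' * x⁻¹ ∈ W' → genBruhatLE S z' z'') →
        z' = z) :=
  statement4_general cs S I g S' hS' W' hW' φ hφ x
end

section
/- Let v, w ∈ 𝔖_n be permutations with v_i = w_i for some index i, and let v̂, ŵ be the sequences obtained by deleting the i-th entry of v and w respectively. Then v ≤ w in the Bruhat–Chevalley order of 𝔖_n if and only if fl(v̂) ≤ fl(ŵ) in the Bruhat–Chevalley order of 𝔖_{n−1}. -/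
/-- The number of inversions (the Coxeter length) of a permutation of `Fin m`. -/
def invCount {m : ℕ} (w : Equiv.Perm (Fin m)) : ℕ :=
  (Finset.univ.filter (fun p : Fin m × Fin m => p.1 < p.2 ∧ w p.2 < w p.1)).card

/-- `t` is a transposition. -/
def IsTransposition {m : ℕ} (t : Equiv.Perm (Fin m)) : Prop :=
  ∃ i j : Fin m, i ≠ j ∧ t = Equiv.swap i j

/-- The Bruhat–Chevalley order on the symmetric group `𝔖_m = Perm (Fin m)`: the partial
order generated by `x < y` whenever `l(x) < l(y)` and `x * y⁻¹` is a transposition. -/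
def permBruhatLE {m : ℕ} : Equiv.Perm (Fin m) → Equiv.Perm (Fin m) → Prop :=
  Relation.ReflTransGen
    (fun x y => invCount x < invCount y ∧ IsTransposition (x * y⁻¹))

/-!
By Ehresmann's criterion, `x ≤ y` in Bruhat order iff for all `K, J` the number of positions
`m < K` with `x m ≥ J` is at most the corresponding number for `y`. A Bruhat step
`x < x * swap p q` (`p < q`, `x p < x q`) raises these counts by one exactly on the box
`p < K ≤ q`, `x p < J ≤ x q`, which gives one direction. Conversely, if the counts of `x` are
dominated by those of `y ≠ x`, let `p` be the first position where they differ; then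
`x p < y p`, and for the first `q > p` with `x p < x q ≤ y p` the step `x * swap p q` is still
dominated by `y`. Deleting a common entry `v i = w i` changes the counts of `v` and `w` by the same
amount and relabels positions and values monotonically, so the criteria for `(v, w)` and for the
flattenings agree.
-/

open Finset Equiv

theorem Finset.sum_univ_eq_add_add_sum_erase_erase {ι M : Type*} [Fintype ι]
    [DecidableEq ι] [AddCommMonoid M] (f : ι → M) {p q : ι} (hpq : p ≠ q) :
    ∑ m, f m = f p + f q + ∑ m ∈ (univ.erase p).erase q, f m := by
  rw [← add_sum_erase _ f (mem_univ p), ← add_sum_erase _ f (mem_erase.2 ⟨hpq.symm, mem_univ q⟩),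
    add_assoc]

namespace Fin

theorem val_succAbove_eq {n : ℕ} (i : Fin (n + 1)) (k : Fin n) :
    (i.succAbove k : ℕ) = if (k : ℕ) < i then (k : ℕ) else (k : ℕ) + 1 := by
  rcases lt_or_ge (k : ℕ) i with h | h
  · rw [succAbove_of_castSucc_lt _ _ h, if_pos h, val_castSucc]
  · rw [succAbove_of_le_castSucc _ _ h, if_neg (not_lt.2 h), val_succ]

theorem exists_lt_iff_succAbove_lt {n : ℕ} (i : Fin (n + 1)) (K : ℕ) :
    ∃ a : ℕ, ∀ k : Fin n, (k : ℕ) < a ↔ (i.succAbove k : ℕ) < K :=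
  ⟨if (i : ℕ) < K then K - 1 else K, fun k => by rw [val_succAbove_eq]; split_ifs <;> omega⟩

theorem exists_succAbove_lt_iff_lt {n : ℕ} (i : Fin (n + 1)) (a : ℕ) :
    ∃ K : ℕ, ∀ k : Fin n, (i.succAbove k : ℕ) < K ↔ (k : ℕ) < a :=
  ⟨if a ≤ i then a else a + 1, fun k => by rw [val_succAbove_eq]; split_ifs <;> omega⟩

end Fin

namespace Equiv.Perm

variable {N : ℕ}

def inversions (x : Perm (Fin N)) : Finset (Fin N × Fin N) :=
  univ.filter fun pr => pr.1 < pr.2 ∧ x pr.2 < x pr.1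

@[simp]
theorem mem_inversions {x : Perm (Fin N)} {a b : Fin N} :
    (a, b) ∈ inversions x ↔ a < b ∧ x b < x a := by
  simp [inversions]

theorem mem_inversions_mul_swap_of_not_lt {x : Perm (Fin N)} {p q a b : Fin N} (hpq : p < q)
    (hx : x p < x q) (hab : (a, b) ∈ inversions x) (hs : ¬swap p q a < swap p q b) :
    (a, b) ∈ inversions (x * swap p q) := by
  rw [mem_inversions] at hab ⊢
  refine ⟨hab.1, ?_⟩
  -- `swap p q` reverses `a < b` only when `a = p ∧ b ≤ q` or `p ≤ a ∧ b = q`.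
  simp only [Perm.mul_apply, swap_apply_def] at hs ⊢
  split_ifs at hs ⊢ <;> grind

theorem invCount_lt_mul_swap {x : Perm (Fin N)} {p q : Fin N} (hpq : p < q) (hx : x p < x q) :
    invCount x < invCount (x * swap p q) := by
  set s := swap p q
  have hss (m : Fin N) : s (s m) = m := swap_apply_self p q m
  -- `F` injects the inversions of `x` into those of `x * s`, and misses `(p, q)`.
  let F : Fin N × Fin N → Fin N × Fin N := fun pr =>
    if s pr.1 < s pr.2 then (s pr.1, s pr.2) else pr
  have hmaps : ∀ pr ∈ inversions x, F pr ∈ inversions (x * s) := by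
    rintro ⟨a, b⟩ hab
    by_cases hs : s a < s b
    · simp only [F, if_pos hs, mem_inversions, Perm.mul_apply, hss]
      exact ⟨hs, (mem_inversions.1 hab).2⟩
    · simpa only [F, if_neg hs] using mem_inversions_mul_swap_of_not_lt hpq hx hab hs
  have hinj : Set.InjOn F (inversions x) := by
    rintro ⟨a₁, a₂⟩ ha ⟨b₁, b₂⟩ hb hF
    rw [mem_coe, mem_inversions] at ha hb
    simp only [F] at hF
    split_ifs at hF with h₁ h₂ h₂ <;> simp only [Prod.mk.injEq] at hF
    · rw [s.injective hF.1, s.injective hF.2]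
    · rw [← hF.1, ← hF.2, hss, hss] at h₂
      exact absurd ha.1 h₂
    · rw [hF.1, hF.2, hss, hss] at h₁
      exact absurd hb.1 h₁
    · rw [hF.1, hF.2]
  have hnew : (p, q) ∈ inversions (x * s) \ (inversions x).image F := by
    simp only [mem_sdiff, mem_inversions, Perm.mul_apply, mem_image, not_exists, not_and,
      Prod.forall]
    refine ⟨⟨hpq, by simpa [s] using hx⟩, fun a b hab hF => ?_⟩
    simp only [F] at hF
    split_ifs at hF with hs <;> simp only [Prod.mk.injEq] at hF
    · have ha : a = q := by simpa [s, hss] using congrArg s hF.1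
      have hb : b = p := by simpa [s, hss] using congrArg s hF.2
      subst ha hb
      exact absurd hab.1 (not_lt.2 hpq.le)
    · rw [hF.1, hF.2] at hab
      exact absurd hx (not_lt.2 hab.2.le)
  calc invCount x = #((inversions x).image F) := (card_image_of_injOn hinj).symm
    _ < #(inversions (x * s)) :=
      card_lt_card ((ssubset_iff_of_subset (image_subset_iff.2 hmaps)).2 ⟨(p, q), mem_sdiff.1 hnew⟩)
    _ = invCount (x * s) := rfl

def rankCount (x : Perm (Fin N)) (K J : ℕ) : ℕ :=
  ∑ m : Fin N, if (m : ℕ) < K ∧ J ≤ (x m : ℕ) then 1 else 0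

def midCount (x : Perm (Fin N)) (p : Fin N) (K J : ℕ) : ℕ :=
  ∑ m : Fin N, if p < m ∧ (m : ℕ) < K ∧ J ≤ (x m : ℕ) then 1 else 0

def RankLE (x y : Perm (Fin N)) : Prop :=
  ∀ K J, rankCount x K J ≤ rankCount y K J

theorem RankLE.refl (x : Perm (Fin N)) : RankLE x x := fun _ _ => le_rfl

theorem RankLE.trans {x y z : Perm (Fin N)} (hxy : RankLE x y) (hyz : RankLE y z) : RankLE x z :=
  fun K J => (hxy K J).trans (hyz K J)

theorem rankCount_mul_swap (x : Perm (Fin N)) {p q : Fin N} (hpq : p < q) (hx : x p < x q)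
    (K J : ℕ) :
    rankCount (x * swap p q) K J = rankCount x K J +
      if (p : ℕ) < K ∧ K ≤ q ∧ (x p : ℕ) < J ∧ J ≤ (x q : ℕ) then 1 else 0 := by
  have hrest : ∀ m ∈ (univ.erase p).erase q, (x * swap p q) m = x m := fun m hm => by
    simp only [mem_erase] at hm
    rw [Perm.mul_apply, swap_apply_of_ne_of_ne hm.2.1 hm.1]
  unfold rankCount
  rw [sum_univ_eq_add_add_sum_erase_erase _ hpq.ne, sum_univ_eq_add_add_sum_erase_erase _ hpq.ne,
    sum_congr rfl fun m hm => by rw [hrest m hm]]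
  simp only [Perm.mul_apply, swap_apply_left, swap_apply_right]
  split_ifs <;> omega

theorem rankCount_split (x : Perm (Fin N)) {p : Fin N} {K : ℕ} (hp : (p : ℕ) < K) (J : ℕ) :
    rankCount x K J = rankCount x p J + (if J ≤ (x p : ℕ) then 1 else 0) + midCount x p K J := by
  have hp' : (if J ≤ (x p : ℕ) then 1 else 0) =
      ∑ m : Fin N, if m = p ∧ J ≤ (x m : ℕ) then 1 else 0 := by
    rw [sum_eq_single p (fun m _ hm => by simp [hm]) (by simp)]
    simp
  rw [rankCount, rankCount, midCount, hp', ← sum_add_distrib, ← sum_add_distrib]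
  refine sum_congr rfl fun m _ => ?_
  rcases lt_trichotomy m p with h | rfl | h <;> split_ifs <;> omega

theorem midCount_self_succ (x : Perm (Fin N)) (p : Fin N) (J : ℕ) :
    midCount x p (p + 1) J = 0 :=
  sum_eq_zero fun m _ => if_neg (by omega)

theorem rankCount_congr {x y : Perm (Fin N)} {K : ℕ} (h : ∀ m : Fin N, (m : ℕ) < K → x m = y m)
    (J : ℕ) : rankCount x K J = rankCount y K J :=
  sum_congr rfl fun m _ => by by_cases hm : (m : ℕ) < K <;> simp [hm, h]

theorem midCount_congr {x : Perm (Fin N)} {p : Fin N} {K J J' : ℕ}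
    (h : ∀ m : Fin N, p < m → (m : ℕ) < K → (J ≤ (x m : ℕ) ↔ J' ≤ (x m : ℕ))) :
    midCount x p K J = midCount x p K J' :=
  sum_congr rfl fun m _ => by
    by_cases hm : p < m ∧ (m : ℕ) < K
    · simp [hm, h m hm.1 hm.2]
    · simp only [← and_assoc, hm, false_and, if_false]

theorem midCount_anti (x : Perm (Fin N)) (p : Fin N) (K : ℕ) {J J' : ℕ} (hJ : J' ≤ J) :
    midCount x p K J ≤ midCount x p K J' :=
  sum_le_sum fun m _ => by split_ifs <;> omega

theorem rankLE_mul_swap_of_invCount_lt {x : Perm (Fin N)} {p q : Fin N}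
    (h : invCount x < invCount (x * swap p q)) : RankLE x (x * swap p q) := by
  wlog hpq : p < q generalizing p q
  · rcases (not_lt.1 hpq).lt_or_eq with hqp | rfl
    · rw [swap_comm] at h ⊢
      exact this h hqp
    · rw [swap_self, ← Perm.one_def, mul_one] at h
      exact absurd h (lt_irrefl _)
  rcases lt_or_gt_of_ne (x.injective.ne hpq.ne) with hx | hx
  · intro K J
    rw [rankCount_mul_swap x hpq hx]
    exact Nat.le_add_right _ _
  · have := invCount_lt_mul_swap (x := x * swap p q) hpq (by simpa using hx)
    rw [mul_swap_mul_self] at this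
    exact absurd h (lt_asymm this)

theorem rankLE_of_permBruhatLE {x y : Perm (Fin N)} (h : permBruhatLE x y) : RankLE x y := by
  induction h with
  | refl => exact RankLE.refl x
  | @tail y z _ hyz ih =>
    obtain ⟨hlen, a, b, -, hswap⟩ := hyz
    have hz : z = y * swap (y⁻¹ a) (y⁻¹ b) := by
      rw [← swap_mul_eq_mul_swap, ← swap_inv, ← hswap, mul_inv_rev, inv_inv, inv_mul_cancel_right]
    rw [hz] at hlen ⊢
    exact ih.trans (rankLE_mul_swap_of_invCount_lt hlen)

theorem RankLE.apply_lt_of_ne {x y : Perm (Fin N)} (h : RankLE x y) {p : Fin N}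
    (hlow : ∀ m : Fin N, m < p → x m = y m) (hp : x p ≠ y p) : x p < y p := by
  have hxy := h (p + 1) (x p)
  rw [rankCount_split x (p := p) (by omega), rankCount_split y (p := p) (by omega),
    midCount_self_succ, midCount_self_succ, rankCount_congr (K := p) hlow] at hxy
  have : (x p : ℕ) ≠ y p := fun h => hp (Fin.ext h)
  split_ifs at hxy <;> omega

theorem RankLE.rankCount_lt_of_box {x y : Perm (Fin N)} (h : RankLE x y) {p q : Fin N}
    (hlow : ∀ m : Fin N, m < p → x m = y m) (hqy : x q ≤ y p)
    (hmid : ∀ m : Fin N, p < m → m < q → ¬(x p < x m ∧ x m ≤ y p))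
    {K J : ℕ} (hK : (p : ℕ) < K ∧ K ≤ q) (hJ : (x p : ℕ) < J ∧ J ≤ x q) :
    rankCount x K J < rankCount y K J := by
  -- Between `p` and `K`, no entry of `x` lies in `(x p, y p]`, so the threshold `J` may be
  -- raised to `y p + 1`, where the dominance hypothesis applies.
  have hraise : midCount x p K J = midCount x p K (y p + 1) :=
    midCount_congr fun m hpm hmK => by
      have := hmid m hpm (by omega)
      constructor <;> intro <;> omega
  have hdom := h K (y p + 1)
  rw [rankCount_split x hK.1, rankCount_split y hK.1, rankCount_congr (K := p) hlow] at hdom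
  rw [rankCount_split x hK.1, rankCount_split y hK.1, rankCount_congr (K := p) hlow, hraise]
  have hanti := midCount_anti y p K (show J ≤ y p + 1 by omega)
  split_ifs at hdom ⊢ <;> omega

theorem RankLE.exists_mul_swap_rankLE {x y : Perm (Fin N)} (h : RankLE x y) (hne : x ≠ y) :
    ∃ p q : Fin N, p < q ∧ x p < x q ∧ RankLE (x * swap p q) y := by
  obtain ⟨p, hp, hpmin⟩ := WellFounded.has_min wellFounded_lt {m | x m ≠ y m}
    (not_forall.1 (mt Equiv.ext hne))
  have hlow : ∀ m, m < p → x m = y m := fun m hm => by_contra fun hne => hpmin m hne hm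
  have hxy := h.apply_lt_of_ne hlow hp
  have hcand : ∃ m, p < m ∧ x p < x m ∧ x m ≤ y p := by
    refine ⟨x.symm (y p), ?_, by simpa using hxy, by simp⟩
    rcases lt_trichotomy (x.symm (y p)) p with hlt | heq | hgt
    · have := hlow _ hlt
      rw [apply_symm_apply] at this
      exact absurd (y.injective this).symm hlt.ne
    · exact absurd (x.symm_apply_eq.1 heq).symm hp
    · exact hgt
  obtain ⟨q, ⟨hpq, hxq, hqy⟩, hqmin⟩ := WellFounded.has_min wellFounded_lt
    {m | p < m ∧ x p < x m ∧ x m ≤ y p} hcand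
  refine ⟨p, q, hpq, hxq, fun K J => ?_⟩
  rw [rankCount_mul_swap x hpq hxq]
  split_ifs with hbox
  · exact h.rankCount_lt_of_box hlow hqy
      (fun m hpm hmq hm => hqmin m ⟨hpm, hm⟩ hmq) ⟨hbox.1, hbox.2.1⟩ hbox.2.2
  · exact h K J

def totalRank (x : Perm (Fin N)) : ℕ :=
  ∑ K ∈ range (N + 1), ∑ J ∈ range (N + 1), rankCount x K J

theorem RankLE.totalRank_le {x y : Perm (Fin N)} (h : RankLE x y) : totalRank x ≤ totalRank y :=
  sum_le_sum fun _ _ => sum_le_sum fun _ _ => h _ _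

theorem totalRank_lt_mul_swap (x : Perm (Fin N)) {p q : Fin N} (hpq : p < q) (hx : x p < x q) :
    totalRank x < totalRank (x * swap p q) := by
  have hle : RankLE x (x * swap p q) := fun K J => by
    rw [rankCount_mul_swap x hpq hx]
    exact Nat.le_add_right _ _
  refine sum_lt_sum (fun K _ => sum_le_sum fun J _ => hle K J) ⟨q, by simp, ?_⟩
  refine sum_lt_sum (fun J _ => hle q J) ⟨x q, by simp, ?_⟩
  rw [rankCount_mul_swap x hpq hx, if_pos ⟨hpq, le_rfl, hx, le_rfl⟩]
  exact Nat.lt_succ_self _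

theorem invCount_lt_mul_swap_and_isTransposition (x : Perm (Fin N)) {p q : Fin N} (hpq : p < q)
    (hx : x p < x q) :
    invCount x < invCount (x * swap p q) ∧ IsTransposition (x * (x * swap p q)⁻¹) :=
  ⟨invCount_lt_mul_swap hpq hx, x p, x q, x.injective.ne hpq.ne,
    by rw [mul_inv_rev, swap_inv, ← mul_assoc, swap_apply_apply]⟩

theorem permBruhatLE_of_rankLE {x y : Perm (Fin N)} (h : RankLE x y) : permBruhatLE x y := by
  induction hgap : totalRank y - totalRank x using Nat.strong_induction_on generalizing x with
  | _ gap ih =>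
    by_cases hxy : x = y
    · exact hxy ▸ Relation.ReflTransGen.refl
    obtain ⟨p, q, hpq, hx, h'⟩ := h.exists_mul_swap_rankLE hxy
    have hlt := totalRank_lt_mul_swap x hpq hx
    have hle := h'.totalRank_le
    exact .head (invCount_lt_mul_swap_and_isTransposition x hpq hx) (ih _ (by omega) h' rfl)

theorem permBruhatLE_iff_rankLE {x y : Perm (Fin N)} : permBruhatLE x y ↔ RankLE x y :=
  ⟨rankLE_of_permBruhatLE, permBruhatLE_of_rankLE⟩

theorem rankCount_eq_of_succAbove {n : ℕ} {v : Perm (Fin (n + 1))} {i : Fin (n + 1)}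
    {u : Perm (Fin n)} (hu : ∀ k : Fin n, (v i).succAbove (u k) = v (i.succAbove k)) {K J a b : ℕ}
    (hK : ∀ k : Fin n, (i.succAbove k : ℕ) < K ↔ (k : ℕ) < a)
    (hJ : ∀ j : Fin n, ((v i).succAbove j : ℕ) < J ↔ (j : ℕ) < b) :
    rankCount v K J = (if (i : ℕ) < K ∧ J ≤ (v i : ℕ) then 1 else 0) + rankCount u a b := by
  rw [rankCount, Fin.sum_univ_succAbove _ i, rankCount]
  congr 1
  refine sum_congr rfl fun k _ => ?_
  rw [← hu k]
  exact if_congr (and_congr (hK k) (not_lt.symm.trans ((hJ (u k)).not.trans not_lt))) rfl rfl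

theorem rankLE_iff_of_succAbove {n : ℕ} {v w : Perm (Fin (n + 1))} {i : Fin (n + 1)}
    (hvw : v i = w i) {u₁ u₂ : Perm (Fin n)}
    (hu₁ : ∀ k : Fin n, (v i).succAbove (u₁ k) = v (i.succAbove k))
    (hu₂ : ∀ k : Fin n, (w i).succAbove (u₂ k) = w (i.succAbove k)) :
    RankLE v w ↔ RankLE u₁ u₂ := by
  constructor
  · intro h a b
    obtain ⟨K, hK⟩ := Fin.exists_succAbove_lt_iff_lt i a
    obtain ⟨J, hJ⟩ := Fin.exists_succAbove_lt_iff_lt (v i) b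
    have := h K J
    rw [rankCount_eq_of_succAbove hu₁ hK hJ, rankCount_eq_of_succAbove hu₂ hK (hvw ▸ hJ),
      ← hvw] at this
    omega
  · intro h K J
    obtain ⟨a, ha⟩ := Fin.exists_lt_iff_succAbove_lt i K
    obtain ⟨b, hb⟩ := Fin.exists_lt_iff_succAbove_lt (v i) J
    have hK k := (ha k).symm
    have hJ j := (hb j).symm
    rw [rankCount_eq_of_succAbove hu₁ hK hJ, rankCount_eq_of_succAbove hu₂ hK (hvw ▸ hJ), ← hvw]
    exact Nat.add_le_add_left (h a b) _

end Equiv.Perm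

/-- Let `v, w ∈ 𝔖_{n+1}` with `v_i = w_i` for some index `i`, and let
`v̂, ŵ` be obtained by deleting the `i`-th entry.  Then `v ≤ w` in the Bruhat–Chevalley
order of `𝔖_{n+1}` iff `fl(v̂) ≤ fl(ŵ)` in the Bruhat–Chevalley order of `𝔖_n`.
Here the flattening `fl(v̂)` is the unique `u ∈ 𝔖_n` whose entries compare the same way
as those of `v̂`, i.e. `(v i).succAbove (u k) = v (i.succAbove k)` for all `k`. -/
theorem statement8 {n : ℕ} (v w : Equiv.Perm (Fin (n + 1))) (i : Fin (n + 1))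
    (hvw : v i = w i)
    (u₁ u₂ : Equiv.Perm (Fin n))
    (hu₁ : ∀ k : Fin n, (v i).succAbove (u₁ k) = v (i.succAbove k))
    (hu₂ : ∀ k : Fin n, (w i).succAbove (u₂ k) = w (i.succAbove k)) :
    permBruhatLE v w ↔ permBruhatLE u₁ u₂ := by
  rw [Equiv.Perm.permBruhatLE_iff_rankLE, Equiv.Perm.permBruhatLE_iff_rankLE]
  exact Equiv.Perm.rankLE_iff_of_succAbove hvw hu₁ hu₂
end

section
/- Let 1 ≤ a_1 < ⋯ < a_k ≤ n, Σ = {a_1, …, a_k}, and let W' ⊆ 𝔖_n be the subgroup generated by the transpositions r_{a_i,a_j} for i < j. Then W' is a parabolic subgroup of 𝔖_n; for any permutation z ∈ 𝔖_n with z_i = a_i for 1 ≤ i ≤ k, conjugation by z gives an isomorphism ι: 𝔖_k → W' (where 𝔖_k ⊆ 𝔖_n consists of permutations fixing k+1, …, n); and the composite ι ∘ fl_Σ: 𝔖_n → W' satisfies properties (a) and (b) of the pattern map, hence equals the pattern map φ for W'. -/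
/-!
Through `ι`, which is `Perm.extendDomainHom` along `a`, the group `W'` is a copy of `𝔖_k` whose
simple reflections are the adjacent transpositions, so its length function is the inversion
number and its reflections are the transpositions `r_{a_i,a_j}`. Left multiplication by a
transposition `(c d)`, `c < d`, raises the inversion number exactly when `c` stands left of `d`
in one-line notation. Since `a_i` stands left of `a_j` in `x` iff `i` stands left of `j` in
`fl_Σ x`, every step `w < (i j) w` of a Bruhat chain above `fl_Σ x` lifts to a step
`y < r_{a_i,a_j} y` above `x`; this is (b). Any two maps with (a) and (b) coincide: where one of
them takes the value `1`, comparing with the other through `1 ≤' h` and the antisymmetry of `≤`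
forces the first to be `1` as well.
-/

variable {W : Type*} [Group W]

/-- The set of adjacent transpositions, the simple reflections of `𝔖_m`. -/
def adjTranspositions (m : ℕ) : Set (Equiv.Perm (Fin m)) :=
  {t | ∃ i j : Fin m, (i : ℕ) + 1 = (j : ℕ) ∧ t = Equiv.swap i j}

open Equiv Finset Function

section Inversions

variable {m : ℕ}

def inversions (w : Perm (Fin m)) : Finset (Fin m × Fin m) :=
  univ.filter fun p => p.1 < p.2 ∧ w p.2 < w p.1

theorem invCount_eq_card_inversions (w : Perm (Fin m)) : invCount w = #(inversions w) := rfl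

@[simp]
theorem mem_inversions {w : Perm (Fin m)} {p : Fin m × Fin m} :
    p ∈ inversions w ↔ p.1 < p.2 ∧ w p.2 < w p.1 := by
  simp [inversions]

theorem invCount_one : invCount (1 : Perm (Fin m)) = 0 :=
  card_eq_zero.2 (filter_eq_empty_iff.2 fun _ _ h => lt_asymm h.1 h.2)

theorem invCount_inv (w : Perm (Fin m)) : invCount w⁻¹ = invCount w := by
  simp only [invCount_eq_card_inversions]
  refine card_nbij' (fun p => (w⁻¹ p.2, w⁻¹ p.1)) (fun p => (w p.2, w p.1)) ?_ ?_ ?_ ?_ <;>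
    intro p <;> simp +contextual

theorem eq_or_eq_of_swap_apply_lt {c d x y : Fin m} (hcd : c < d) (hxy : x < y)
    (h : swap c d y < swap c d x) : x = c ∧ y ≤ d ∨ c ≤ x ∧ y = d := by
  simp only [swap_apply_def] at h
  split_ifs at h <;> omega

theorem mem_erase_inversions_mul_swap {w : Perm (Fin m)} {c d x y : Fin m} (hcd : c < d)
    (h : w c < w d) (hxy : (x, y) ∈ inversions w) (hrev : swap c d y < swap c d x) :
    (x, y) ∈ (inversions (w * swap c d)).erase (c, d) := by
  obtain ⟨hxy, hwyx⟩ := mem_inversions.1 hxy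
  simp only [mem_erase, ne_eq, Prod.mk.injEq, mem_inversions, Perm.mul_apply]
  rcases eq_or_eq_of_swap_apply_lt hcd hxy hrev with ⟨rfl, -⟩ | ⟨-, rfl⟩
  · have hyd : y ≠ d := by rintro rfl; exact lt_asymm h hwyx
    rw [swap_apply_left, swap_apply_of_ne_of_ne hxy.ne' hyd]
    exact ⟨fun h' => hyd h'.2, hxy, hwyx.trans h⟩
  · have hxc : x ≠ c := by rintro rfl; exact lt_asymm h hwyx
    rw [swap_apply_right, swap_apply_of_ne_of_ne hxc hxy.ne]
    exact ⟨fun h' => hxc h'.1, hxy, h.trans hwyx⟩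

theorem invCount_lt_mul_swap {w : Perm (Fin m)} {c d : Fin m} (hcd : c < d) (h : w c < w d) :
    invCount w < invCount (w * swap c d) := by
  -- `Φ` is an involution on increasing pairs; it injects the inversions of `w` into those of
  -- `w * swap c d` other than `(c, d)`.
  let Φ : Fin m × Fin m → Fin m × Fin m := fun p =>
    if swap c d p.1 < swap c d p.2 then (swap c d p.1, swap c d p.2) else p
  have hΦΦ : ∀ p : Fin m × Fin m, p.1 < p.2 → Φ (Φ p) = p := by
    rintro ⟨x, y⟩ hxy
    by_cases hσ : swap c d x < swap c d y
    · simp [Φ, hσ, hxy]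
    · simp [Φ, hσ]
  have hmaps : ∀ p ∈ inversions w, Φ p ∈ (inversions (w * swap c d)).erase (c, d) := by
    rintro ⟨x, y⟩ hp
    by_cases hσ : swap c d x < swap c d y
    · simp only [Φ, if_pos hσ, mem_erase, ne_eq, Prod.mk.injEq, mem_inversions, Perm.mul_apply,
        swap_apply_self]
      refine ⟨fun hσcd => ?_, hσ, (mem_inversions.1 hp).2⟩
      rw [swap_apply_eq_iff, swap_apply_left, swap_apply_eq_iff, swap_apply_right] at hσcd
      obtain ⟨rfl, rfl⟩ := hσcd
      exact lt_asymm hcd (mem_inversions.1 hp).1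
    · have hrev : swap c d y < swap c d x :=
        lt_of_le_of_ne (not_lt.1 hσ) ((swap c d).injective.ne (mem_inversions.1 hp).1.ne')
      simpa only [Φ, if_neg hσ] using mem_erase_inversions_mul_swap hcd h hp hrev
  have hinj : Set.InjOn Φ (inversions w) := fun p hp q hq hpq => by
    rw [← hΦΦ p (mem_inversions.1 hp).1, hpq, hΦΦ q (mem_inversions.1 hq).1]
  have hcd_mem : (c, d) ∈ inversions (w * swap c d) := by simp [hcd, h]
  simp only [invCount_eq_card_inversions]
  calc #(inversions w) ≤ #((inversions (w * swap c d)).erase (c, d)) :=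
        card_le_card_of_injOn Φ hmaps hinj
    _ < #(inversions (w * swap c d)) := card_erase_lt_of_mem hcd_mem

theorem invCount_mul_swap_of_adjacent {w : Perm (Fin m)} {c d : Fin m} (hcd : (c : ℕ) + 1 = d)
    (h : w c < w d) : invCount (w * swap c d) = invCount w + 1 := by
  have hinv : inversions (w * swap c d) =
      insert (c, d) ((inversions w).map ((swap c d).prodCongr (swap c d)).toEmbedding) := by
    ext ⟨x, y⟩
    simp only [mem_inversions, Perm.mul_apply, mem_insert, Prod.mk.injEq, mem_map_equiv,
      prodCongr_symm, prodCongr_apply, Prod.map, symm_swap, swap_apply_def]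
    split_ifs <;> omega
  have hnot : (c, d) ∉ (inversions w).map ((swap c d).prodCongr (swap c d)).toEmbedding := by
    simp only [mem_map_equiv, prodCongr_symm, symm_swap, prodCongr_apply, Prod.map_apply,
      swap_apply_left, swap_apply_right, mem_inversions, not_and, not_lt]
    omega
  simp only [invCount_eq_card_inversions, hinv, card_insert_of_notMem hnot, card_map]

theorem invCount_lt_swap_mul_iff {u : Perm (Fin m)} {c d : Fin m} (hcd : c < d) :
    invCount u < invCount (swap c d * u) ↔ u⁻¹ c < u⁻¹ d := by
  have hlt : ∀ v : Perm (Fin m), v⁻¹ c < v⁻¹ d → invCount v < invCount (swap c d * v) := by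
    intro v hv
    rw [← invCount_inv v, ← invCount_inv (swap c d * v), mul_inv_rev, swap_inv]
    exact invCount_lt_mul_swap hcd hv
  refine ⟨fun h => ?_, hlt u⟩
  by_contra hle
  have hdc : u⁻¹ d < u⁻¹ c := lt_of_le_of_ne (not_lt.1 hle) (u⁻¹.injective.ne hcd.ne')
  have := hlt (swap c d * u) (by simpa [mul_inv_rev] using hdc)
  rw [swap_mul_self_mul] at this
  exact lt_asymm h this

theorem invCount_swap_mul_of_adjacent {u : Perm (Fin m)} {c d : Fin m}
    (hcd : (c : ℕ) + 1 = d) (h : u⁻¹ c < u⁻¹ d) : invCount (swap c d * u) = invCount u + 1 := by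
  rw [← invCount_inv u, ← invCount_inv (swap c d * u), mul_inv_rev, swap_inv]
  exact invCount_mul_swap_of_adjacent hcd h

theorem invCount_mul_le_of_mem_adjTranspositions {t : Perm (Fin m)}
    (ht : t ∈ adjTranspositions m) (u : Perm (Fin m)) : invCount (t * u) ≤ invCount u + 1 := by
  obtain ⟨c, d, hcd, rfl⟩ := ht
  rcases lt_or_gt_of_ne (u⁻¹.injective.ne (Fin.ne_of_val_ne (by omega : (c : ℕ) ≠ d))) with h | h
  · exact (invCount_swap_mul_of_adjacent hcd h).le
  · have := invCount_swap_mul_of_adjacent hcd (u := swap c d * u) (by simpa [mul_inv_rev] using h)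
    rw [swap_mul_self_mul] at this
    omega

theorem exists_mem_adjTranspositions_invCount_mul_add_one {u : Perm (Fin m)} (hu : u ≠ 1) :
    ∃ t ∈ adjTranspositions m, invCount (t * u) + 1 = invCount u := by
  cases m with
  | zero => exact absurd (Subsingleton.elim u 1) hu
  | succ m =>
    have hdesc : ∃ i : Fin m, u⁻¹ i.succ < u⁻¹ i.castSucc := by
      by_contra! hasc
      refine hu (inv_eq_one.1 (Perm.ext fun x => ?_))
      refine congrFun (StrictMono.eq_id (Fin.strictMono_iff_lt_succ.2 fun i => ?_)) x
      exact lt_of_le_of_ne (hasc i) (u⁻¹.injective.ne Fin.castSucc_lt_succ.ne)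
    obtain ⟨i, hi⟩ := hdesc
    refine ⟨swap i.castSucc i.succ, ⟨_, _, rfl, rfl⟩, ?_⟩
    have := invCount_swap_mul_of_adjacent (u := swap i.castSucc i.succ * u) (c := i.castSucc)
      (d := i.succ) rfl (by simpa [mul_inv_rev] using hi)
    rwa [swap_mul_self_mul, eq_comm] at this

theorem exists_list_adjTranspositions_prod_eq (u : Perm (Fin m)) :
    ∃ l : List (Perm (Fin m)),
      (∀ t ∈ l, t ∈ adjTranspositions m) ∧ l.length = invCount u ∧ l.prod = u := by
  induction hN : invCount u using Nat.strong_induction_on generalizing u with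
  | _ N ih =>
    rcases eq_or_ne u 1 with rfl | hu
    · exact ⟨[], by simp, by simp [← hN, invCount_one], rfl⟩
    obtain ⟨t, ht, htu⟩ := exists_mem_adjTranspositions_invCount_mul_add_one hu
    obtain ⟨l, hl, hlen, hprod⟩ := ih _ (by omega) (t * u) rfl
    refine ⟨t :: l, ?_, by simp [hlen, ← hN, ← htu], ?_⟩
    · simpa [ht] using hl
    · obtain ⟨c, d, -, rfl⟩ := ht
      rw [List.prod_cons, hprod, swap_mul_self_mul]

theorem invCount_prod_le_length (l : List (Perm (Fin m)))
    (hl : ∀ t ∈ l, t ∈ adjTranspositions m) : invCount l.prod ≤ l.length := by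
  induction l with
  | nil => simp [invCount_one]
  | cons t l ih =>
    simp only [List.forall_mem_cons] at hl
    rw [List.prod_cons, List.length_cons]
    exact (invCount_mul_le_of_mem_adjTranspositions hl.1 _).trans (by simpa using ih hl.2)

theorem genLength_adjTranspositions (u : Perm (Fin m)) :
    genLength (adjTranspositions m) u = invCount u := by
  obtain ⟨l, hl, hlen, hprod⟩ := exists_list_adjTranspositions_prod_eq u
  refine le_antisymm (Nat.sInf_le ⟨l, hl, hlen, hprod⟩) (le_csInf ⟨_, l, hl, hlen, hprod⟩ ?_)
  rintro N ⟨l', hl', rfl, rfl⟩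
  exact invCount_prod_le_length l' hl'

theorem closure_adjTranspositions : Subgroup.closure (adjTranspositions m) = ⊤ := by
  refine eq_top_iff.2 fun u _ => ?_
  obtain ⟨l, hl, -, rfl⟩ := exists_list_adjTranspositions_prod_eq u
  exact Subgroup.list_prod_mem _ fun t ht => Subgroup.subset_closure (hl t ht)

theorem isTransposition_of_mem_genReflections {r : Perm (Fin m)}
    (hr : r ∈ genReflections (adjTranspositions m)) : IsTransposition r := by
  obtain ⟨v, -, _, ⟨c, d, hcd, rfl⟩, rfl⟩ := hr
  exact ⟨v c, v d, v.injective.ne (Fin.ne_of_val_ne (by omega)), (swap_apply_apply v c d).symm⟩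

theorem genBruhatLE_one (u : Perm (Fin m)) : genBruhatLE (adjTranspositions m) 1 u := by
  induction hN : invCount u using Nat.strong_induction_on generalizing u with
  | _ N ih =>
    rcases eq_or_ne u 1 with rfl | hu
    · exact .refl
    obtain ⟨t, ht, htu⟩ := exists_mem_adjTranspositions_invCount_mul_add_one hu
    refine .tail (ih _ (by omega) (t * u) rfl) ⟨?_, 1, Subgroup.one_mem _, t, ht, by group⟩
    rw [genLength_adjTranspositions, genLength_adjTranspositions]
    omega

theorem permBruhatLE.eq_or_invCount_lt {x y : Perm (Fin m)} (h : permBruhatLE x y) :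
    x = y ∨ invCount x < invCount y := by
  induction h with
  | refl => exact .inl rfl
  | tail _ hyz ih => exact .inr (ih.elim (· ▸ hyz.1) (·.trans hyz.1))

theorem permBruhatLE.antisymm {x y : Perm (Fin m)} (hxy : permBruhatLE x y)
    (hyx : permBruhatLE y x) : x = y := by
  rcases hxy.eq_or_invCount_lt with h | h
  · exact h
  rcases hyx.eq_or_invCount_lt with h' | h'
  · exact h'.symm
  · omega

end Inversions

section Transport

variable {G H : Type*} [Group G] [Group H] {f : G →* H}

theorem exists_list_map_eq_of_forall_mem_image {T : Set G} :
    ∀ l : List H, (∀ h ∈ l, h ∈ f '' T) → ∃ l' : List G, (∀ g ∈ l', g ∈ T) ∧ l'.map f = l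
  | [], _ => ⟨[], by simp, rfl⟩
  | h :: l, hl => by
    simp only [List.forall_mem_cons] at hl
    obtain ⟨g, hg, rfl⟩ := hl.1
    obtain ⟨l', hl', rfl⟩ := exists_list_map_eq_of_forall_mem_image l hl.2
    exact ⟨g :: l', by simpa [hg] using hl', rfl⟩

theorem genLength_image (hf : Injective f) (T : Set G) (g : G) :
    genLength (f '' T) (f g) = genLength T g := by
  unfold genLength
  congr 1
  ext N
  constructor
  · rintro ⟨l, hl, rfl, hprod⟩
    obtain ⟨l', hl', rfl⟩ := exists_list_map_eq_of_forall_mem_image l hl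
    exact ⟨l', hl', by simp, hf (by rw [← hprod, map_list_prod])⟩
  · rintro ⟨l, hl, rfl, rfl⟩
    exact ⟨l.map f, by simpa using fun g hg => ⟨g, hl g hg, rfl⟩, by simp, (map_list_prod f l).symm⟩

theorem genReflections_image (T : Set G) :
    genReflections (f '' T) = f '' genReflections T := by
  ext r
  constructor
  · rintro ⟨u, hu, _, ⟨t, ht, rfl⟩, rfl⟩
    rw [← MonoidHom.map_closure] at hu
    obtain ⟨v, hv, rfl⟩ := hu
    exact ⟨v * t * v⁻¹, ⟨v, hv, t, ht, rfl⟩, by simp⟩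
  · rintro ⟨_, ⟨v, hv, t, ht, rfl⟩, rfl⟩
    refine ⟨f v, ?_, f t, ⟨t, ht, rfl⟩, by simp⟩
    rw [← MonoidHom.map_closure]
    exact ⟨v, hv, rfl⟩

theorem genBruhatLE_image_iff (hf : Injective f) (T : Set G) {x y : G} :
    genBruhatLE (f '' T) (f x) (f y) ↔ genBruhatLE T x y := by
  constructor
  · intro h
    suffices ∀ y', genBruhatLE (f '' T) (f x) y' → ∃ y, f y = y' ∧ genBruhatLE T x y by
      obtain ⟨y'', hy'', hle⟩ := this _ h
      exact hf hy'' ▸ hle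
    intro y' h'
    induction h' with
    | refl => exact ⟨x, rfl, .refl⟩
    | @tail _ z _ hstep ih =>
      obtain ⟨y, rfl, hle⟩ := ih
      obtain ⟨hlen, hr⟩ := hstep
      obtain ⟨r, hr, hry⟩ := genReflections_image (f := f) T ▸ hr
      obtain rfl : z = f (r⁻¹ * y) := by rw [map_mul, map_inv, hry]; group
      refine ⟨r⁻¹ * y, rfl, .tail hle ⟨?_, ?_⟩⟩
      · rwa [← genLength_image hf, ← genLength_image hf]
      · rwa [mul_inv_rev, inv_inv, mul_inv_cancel_left]
  · intro h
    refine Relation.ReflTransGen.lift f (fun a b hab => ⟨?_, ?_⟩) _ _ h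
    · rw [genLength_image hf, genLength_image hf]
      exact hab.1
    · rw [← map_inv, ← map_mul, genReflections_image]
      exact ⟨_, hab.2, rfl⟩

end Transport

structure IsPatternMap_s9 {G : Type*} [Group G] (H : Subgroup G) (le le' : G → G → Prop)
    (φ : G → G) : Prop where
  mem : ∀ x, φ x ∈ H
  map_mul : ∀ h ∈ H, ∀ x, φ (h * x) = h * φ x
  le_of_le : ∀ x, ∀ h ∈ H, le' (φ x) (φ (h * x)) → le x (h * x)

theorem IsPatternMap_s9.eq {G : Type*} [Group G] {H : Subgroup G} {le le' : G → G → Prop}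
    (hanti : ∀ x y, le x y → le y x → x = y) (hone : ∀ h ∈ H, le' 1 h) {φ ψ : G → G}
    (hφ : IsPatternMap_s9 H le le' φ) (hψ : IsPatternMap_s9 H le le' ψ) : φ = ψ := by
  have hfix : ∀ x, ψ x = 1 → φ x = 1 := by
    intro x hx
    have hp : φ x ∈ H := hφ.mem x
    have hp' : (φ x)⁻¹ ∈ H := inv_mem hp
    have hle : le ((φ x)⁻¹ * x) x := by
      simpa using hφ.le_of_le ((φ x)⁻¹ * x) _ hp
        (by simpa [hφ.map_mul _ hp'] using hone _ hp)
    have hge : le x ((φ x)⁻¹ * x) :=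
      hψ.le_of_le x _ hp' (by simpa [hψ.map_mul _ hp', hx] using hone _ hp')
    simpa using hanti _ _ hle hge
  funext x
  have hψx : (ψ x)⁻¹ ∈ H := inv_mem (hψ.mem x)
  calc φ x = φ (ψ x * ((ψ x)⁻¹ * x)) := by rw [mul_inv_cancel_left]
    _ = ψ x * φ ((ψ x)⁻¹ * x) := hφ.map_mul _ (hψ.mem x) _
    _ = ψ x := by rw [hfix _ (by rw [hψ.map_mul _ hψx, inv_mul_cancel]), mul_one]

section Flattening

variable {k n : ℕ} {a : Fin k → Fin n}

open Classical in
noncomputable def extendPerm (ha : Injective a) : Perm (Fin k) →* Perm (Fin n) :=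
  Perm.extendDomainHom (Equiv.ofInjective a ha)

theorem extendPerm_apply_apply (ha : Injective a) (u : Perm (Fin k)) (i : Fin k) :
    extendPerm ha u (a i) = a (u i) := by
  simpa [extendPerm] using Perm.extendDomain_apply_image u (Equiv.ofInjective a ha) i

theorem extendPerm_apply_of_notMem (ha : Injective a) (u : Perm (Fin k)) {b : Fin n}
    (hb : b ∉ Set.range a) : extendPerm ha u b = b := by
  simpa [extendPerm] using Perm.extendDomain_apply_not_subtype u (Equiv.ofInjective a ha) hb

theorem extendPerm_injective (ha : Injective a) : Injective (extendPerm ha) := by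
  classical
  exact Perm.extendDomainHom_injective _

theorem eq_extendPerm_of_apply (ha : Injective a) {σ : Perm (Fin n)} {u : Perm (Fin k)}
    (hσa : ∀ i, σ (a i) = a (u i)) (hσ : ∀ b ∉ Set.range a, σ b = b) :
    σ = extendPerm ha u := by
  ext b
  by_cases hb : b ∈ Set.range a
  · obtain ⟨i, rfl⟩ := hb
    rw [hσa, extendPerm_apply_apply]
  · rw [hσ b hb, extendPerm_apply_of_notMem ha u hb]

theorem extendPerm_swap (ha : Injective a) (i j : Fin k) :
    extendPerm ha (swap i j) = swap (a i) (a j) := by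
  refine (eq_extendPerm_of_apply ha (fun l => (ha.map_swap i j l).symm) fun b hb => ?_).symm
  exact swap_apply_of_ne_of_ne (fun h => hb ⟨i, h.symm⟩) fun h => hb ⟨j, h.symm⟩

theorem extendPerm_image_adjTranspositions (ha : Injective a) :
    extendPerm ha '' adjTranspositions k =
      {t | ∃ i j : Fin k, (i : ℕ) + 1 = j ∧ t = swap (a i) (a j)} := by
  ext t
  constructor
  · rintro ⟨_, ⟨i, j, hij, rfl⟩, rfl⟩
    exact ⟨i, j, hij, extendPerm_swap ha i j⟩
  · rintro ⟨i, j, hij, rfl⟩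
    exact ⟨swap i j, ⟨i, j, hij, rfl⟩, extendPerm_swap ha i j⟩

theorem range_extendPerm (ha : Injective a) :
    (extendPerm ha).range = Subgroup.closure {t | ∃ i j, i ≠ j ∧ t = swap (a i) (a j)} := by
  rw [MonoidHom.range_eq_map, ← Perm.closure_isSwap, MonoidHom.map_closure]
  congr 1
  ext t
  constructor
  · rintro ⟨_, ⟨i, j, hij, rfl⟩, rfl⟩
    exact ⟨i, j, hij, extendPerm_swap ha i j⟩
  · rintro ⟨i, j, hij, rfl⟩
    exact ⟨swap i j, ⟨i, j, hij, rfl⟩, extendPerm_swap ha i j⟩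

theorem closure_extendPerm_image_adjTranspositions (ha : Injective a) :
    Subgroup.closure (extendPerm ha '' adjTranspositions k) = (extendPerm ha).range := by
  rw [← MonoidHom.map_closure, closure_adjTranspositions, MonoidHom.range_eq_map]

/-- `IsFlattening a x w` says `w = fl_Σ x` for `Σ = Set.range a`. -/
def IsFlattening (a : Fin k → Fin n) (x : Perm (Fin n)) (w : Perm (Fin k)) : Prop :=
  ∃ p : Fin k → Fin n, StrictMono p ∧ ∀ j, x (p j) = a (w j)

namespace IsFlattening

variable {x : Perm (Fin n)} {w : Perm (Fin k)}

theorem unique (ha : Injective a) {w' : Perm (Fin k)} (h : IsFlattening a x w)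
    (h' : IsFlattening a x w') : w = w' := by
  obtain ⟨p, hp, hx⟩ := h
  obtain ⟨q, hq, hx'⟩ := h'
  have hrange : ∀ (r : Fin k → Fin n) (v : Perm (Fin k)), (∀ j, x (r j) = a (v j)) →
      Set.range r = Set.range fun i => x⁻¹ (a i) := fun r v hr => by
    rw [← v.surjective.range_comp (fun i => x⁻¹ (a i))]
    exact congrArg Set.range (funext fun j => by simp [← hr j])
  have hpq : p = q := (hp.range_inj hq).1 ((hrange p w hx).trans (hrange q w' hx').symm)
  ext j
  rw [ha (by rw [← hx, ← hx', hpq] : a (w j) = a (w' j))]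

theorem extendPerm_mul (ha : Injective a) (h : IsFlattening a x w) (u : Perm (Fin k)) :
    IsFlattening a (extendPerm ha u * x) (u * w) := by
  obtain ⟨p, hp, hx⟩ := h
  exact ⟨p, hp, fun j => by rw [Perm.mul_apply, hx, extendPerm_apply_apply, Perm.mul_apply]⟩

theorem inv_apply_lt (h : IsFlattening a x w) {i j : Fin k}
    (hij : w⁻¹ i < w⁻¹ j) : x⁻¹ (a i) < x⁻¹ (a j) := by
  obtain ⟨p, hp, hx⟩ := h
  have hpos : ∀ l, x⁻¹ (a l) = p (w⁻¹ l) := fun l => by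
    rw [Perm.inv_eq_iff_eq, hx]
    simp
  rw [hpos, hpos]
  exact hp hij

theorem invCount_lt_swap_mul (ha : StrictMono a) (h : IsFlattening a x w) {i j : Fin k}
    (hij : i ≠ j) (hlt : invCount w < invCount (swap i j * w)) :
    invCount x < invCount (swap (a i) (a j) * x) := by
  wlog hij' : i < j generalizing i j
  · rw [swap_comm] at hlt ⊢
    exact this hij.symm hlt (lt_of_le_of_ne (not_lt.1 hij') hij.symm)
  rw [invCount_lt_swap_mul_iff (ha hij')]
  exact h.inv_apply_lt ((invCount_lt_swap_mul_iff hij').1 hlt)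

end IsFlattening

theorem permBruhatLE_extendPerm_mul_of_genBruhatLE (ha : StrictMono a)
    {fl : Perm (Fin n) → Perm (Fin k)} (hfl : ∀ x, IsFlattening a x (fl x)) (x : Perm (Fin n))
    {w : Perm (Fin k)} (h : genBruhatLE (adjTranspositions k) (fl x) w) :
    permBruhatLE x (extendPerm ha.injective (w * (fl x)⁻¹) * x) := by
  induction h with
  | refl =>
    rw [mul_inv_cancel, map_one, one_mul]
    exact Relation.ReflTransGen.refl
  | @tail w w' _ hstep ih =>
    obtain ⟨hlen, hr⟩ := hstep
    obtain ⟨i, j, hij, ht⟩ := isTransposition_of_mem_genReflections hr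
    obtain rfl : w' = swap i j * w := by rw [← swap_inv, ← ht]; group
    set y := extendPerm ha.injective (w * (fl x)⁻¹) * x
    have hy : IsFlattening a y w := by
      simpa only [inv_mul_cancel_right] using (hfl x).extendPerm_mul ha.injective (w * (fl x)⁻¹)
    have hswap :
        extendPerm ha.injective (swap i j * w * (fl x)⁻¹) * x = swap (a i) (a j) * y := by
      rw [mul_assoc (swap i j), map_mul, extendPerm_swap, mul_assoc]
    rw [genLength_adjTranspositions, genLength_adjTranspositions] at hlen
    refine .tail ih ⟨?_, a i, a j, ha.injective.ne hij, ?_⟩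
    · rw [hswap]
      exact hy.invCount_lt_swap_mul ha hij hlen
    · rw [hswap, mul_inv_rev, mul_inv_cancel_left, swap_inv]

theorem isPatternMap_extendPerm_flattening (ha : StrictMono a)
    {fl : Perm (Fin n) → Perm (Fin k)} (hfl : ∀ x, IsFlattening a x (fl x)) :
    IsPatternMap_s9 (extendPerm ha.injective).range permBruhatLE
      (genBruhatLE (extendPerm ha.injective '' adjTranspositions k))
      (fun x => extendPerm ha.injective (fl x)) := by
  have hfl_mul : ∀ u x, fl (extendPerm ha.injective u * x) = u * fl x := fun u x =>
    (hfl _).unique ha.injective ((hfl x).extendPerm_mul ha.injective u)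
  refine ⟨fun x => ⟨fl x, rfl⟩, ?_, ?_⟩
  · rintro _ ⟨u, rfl⟩ x
    rw [hfl_mul, map_mul]
  · rintro x _ ⟨u, rfl⟩ hle
    rw [hfl_mul, genBruhatLE_image_iff (extendPerm_injective ha.injective)] at hle
    simpa only [mul_inv_cancel_right] using
      permBruhatLE_extendPerm_mul_of_genBruhatLE ha hfl x hle

end Flattening

section Parabolic

variable {k n : ℕ} {a : Fin k → Fin n}

theorem conj_eq_extendPerm (hkn : k ≤ n) (ha : Injective a) {z : Perm (Fin n)}
    (hz : ∀ j, z (Fin.castLE hkn j) = a j) {u : Perm (Fin k)} {v : Perm (Fin n)}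
    (hv : (∀ j, v (Fin.castLE hkn j) = Fin.castLE hkn (u j)) ∧
      ∀ b, (∀ j, b ≠ Fin.castLE hkn j) → v b = b) :
    z * v * z⁻¹ = extendPerm ha u := by
  have hz' : ∀ j, z⁻¹ (a j) = Fin.castLE hkn j := fun j => Perm.inv_eq_iff_eq.2 (hz j).symm
  refine eq_extendPerm_of_apply ha (fun i => ?_) fun b hb => ?_
  · simp only [Perm.mul_apply, hz', hv.1, hz]
  · have hfix : v (z⁻¹ b) = z⁻¹ b :=
      hv.2 _ fun j hj => hb ⟨j, by rw [← hz, ← hj]; exact z.apply_symm_apply b⟩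
    rw [Perm.mul_apply, Perm.mul_apply, hfix]
    exact z.apply_symm_apply b

theorem closure_conj_castLE_adjTranspositions (hkn : k ≤ n) (ha : Injective a)
    {z : Perm (Fin n)} (hz : ∀ j, z (Fin.castLE hkn j) = a j) :
    Subgroup.closure ((fun t => z * t * z⁻¹) ''
      {t | ∃ i j : Fin k, (i : ℕ) + 1 = j ∧ t = swap (Fin.castLE hkn i) (Fin.castLE hkn j)}) =
      (extendPerm ha).range := by
  rw [← closure_extendPerm_image_adjTranspositions ha]
  congr 1
  ext t
  constructor
  · rintro ⟨_, ⟨i, j, hij, rfl⟩, rfl⟩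
    exact ⟨swap i j, ⟨i, j, hij, rfl⟩, by rw [extendPerm_swap, ← hz, ← hz, swap_apply_apply]⟩
  · rintro ⟨_, ⟨i, j, hij, rfl⟩, rfl⟩
    exact ⟨_, ⟨i, j, hij, rfl⟩, by rw [extendPerm_swap, ← hz, ← hz, swap_apply_apply]⟩

end Parabolic

/-- Let `1 ≤ a_1 < ⋯ < a_k ≤ n` (encoded by a strictly monotone
`a : Fin k → Fin n`), `Σ = {a_1, …, a_k}`, and let `W' ⊆ 𝔖_n` be generated by the
transpositions `r_{a_i, a_j}`, `i ≠ j`.  Then `W'` is a parabolic subgroup of `𝔖_n`;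
for `z ∈ 𝔖_n` with `z_i = a_i` (`1 ≤ i ≤ k`), conjugation by `z` gives an isomorphism
`ι : 𝔖_k → W'` (where `u ∈ 𝔖_k` is first extended to `𝔖_n` fixing the remaining
letters by the lift `L`); and `ι ∘ fl_Σ` satisfies properties (a) and (b) of the
pattern map, hence equals the pattern map `φ` for `W'`.  Here `fl_Σ` is characterized
by: the entries of `x` lying in `Σ`, read in position order `p`, are
`a (fl_Σ x 1), …, a (fl_Σ x k)`; `S'` is the set of simple reflections
`r_{a_i, a_{i+1}}` of `W'`, and `≤'` its Bruhat–Chevalley order. -/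
theorem statement9 {n k : ℕ} (hkn : k ≤ n) (a : Fin k → Fin n) (ha : StrictMono a)
    (W' : Subgroup (Equiv.Perm (Fin n)))
    (hW' : W' = Subgroup.closure
      {t | ∃ i j : Fin k, i ≠ j ∧ t = Equiv.swap (a i) (a j)})
    (S' : Set (Equiv.Perm (Fin n)))
    (hS' : S' = {t | ∃ i j : Fin k, (i : ℕ) + 1 = (j : ℕ) ∧ t = Equiv.swap (a i) (a j)})
    (z : Equiv.Perm (Fin n)) (hz : ∀ j : Fin k, z (Fin.castLE hkn j) = a j)
    (L : Equiv.Perm (Fin k) → Equiv.Perm (Fin n))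
    (hL : ∀ u : Equiv.Perm (Fin k),
      (∀ j : Fin k, L u (Fin.castLE hkn j) = Fin.castLE hkn (u j)) ∧
      (∀ m : Fin n, (∀ j : Fin k, m ≠ Fin.castLE hkn j) → L u m = m))
    (ι : Equiv.Perm (Fin k) → Equiv.Perm (Fin n))
    (hι : ∀ u, ι u = z * L u * z⁻¹)
    (flSig : Equiv.Perm (Fin n) → Equiv.Perm (Fin k))
    (hfl : ∀ x : Equiv.Perm (Fin n),
      ∃ p : Fin k → Fin n, StrictMono p ∧ ∀ j : Fin k, x (p j) = a (flSig x j)) :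
    (∃ (T : Set (Equiv.Perm (Fin n))) (g : Equiv.Perm (Fin n)),
      T ⊆ adjTranspositions n ∧
      W' = Subgroup.closure ((fun t => g * t * g⁻¹) '' T)) ∧
    (∀ u v : Equiv.Perm (Fin k), ι (u * v) = ι u * ι v) ∧
    Function.Injective ι ∧
    Set.range ι = (W' : Set (Equiv.Perm (Fin n))) ∧
    (∀ p ∈ W', ∀ x : Equiv.Perm (Fin n), ι (flSig (p * x)) = p * ι (flSig x)) ∧
    (∀ x : Equiv.Perm (Fin n), ∀ p ∈ W',
      genBruhatLE S' (ι (flSig x)) (ι (flSig (p * x))) → permBruhatLE x (p * x)) ∧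
    (∀ φ : Equiv.Perm (Fin n) → Equiv.Perm (Fin n),
      (∀ x, φ x ∈ W') →
      (∀ p ∈ W', ∀ x, φ (p * x) = p * φ x) →
      (∀ x : Equiv.Perm (Fin n), ∀ p ∈ W',
        genBruhatLE S' (φ x) (φ (p * x)) → permBruhatLE x (p * x)) →
      φ = fun x => ι (flSig x)) := by
  set e := extendPerm ha.injective
  obtain rfl : ι = e := funext fun u => (hι u).trans (conj_eq_extendPerm hkn ha.injective hz (hL u))
  obtain rfl : W' = e.range := hW'.trans (range_extendPerm ha.injective).symm
  obtain rfl : S' = e '' adjTranspositions k :=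
    hS'.trans (extendPerm_image_adjTranspositions ha.injective).symm
  have hpattern := isPatternMap_extendPerm_flattening ha hfl
  have hone : ∀ h ∈ e.range, genBruhatLE (e '' adjTranspositions k) 1 h := by
    rintro _ ⟨u, rfl⟩
    rw [← map_one e, genBruhatLE_image_iff (extendPerm_injective ha.injective)]
    exact genBruhatLE_one u
  refine ⟨⟨_, z, ?_, (closure_conj_castLE_adjTranspositions hkn ha.injective hz).symm⟩,
    map_mul e, extendPerm_injective ha.injective, MonoidHom.coe_range e, hpattern.map_mul,
    hpattern.le_of_le, fun φ hmem hmul hle =>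
      IsPatternMap_s9.eq (fun _ _ => permBruhatLE.antisymm) hone ⟨hmem, hmul, hle⟩ hpattern⟩
  rintro _ ⟨i, j, hij, rfl⟩
  exact ⟨_, _, hij, rfl⟩
end
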